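/- arXiv:2103.14091 — 7 statements merged into one kernel-verified Lean document; each statement's English description precedes it below -/
import Mathlib

section
/- For any convex corner 𝒜 in ℝ^d with 𝒜 ≠ ℝ^d_+ and non-empty interior, M(𝒜) = 1/N(𝒜) = γ(𝒜^♭), where 𝒜^♭ is the anti-blocker of 𝒜. -/
open Finset

lemma pi_repr' (d : ℕ) (x : Fin d → ℝ) (f : (Fin d → ℝ) →L[ℝ] ℝ) :
    f x = ∑ i, x i * f (Pi.single i 1) := by
  have hx : x = ∑ i, x i • (Pi.single i 1 : Fin d → ℝ) := by
    funext j
    simp [Finset.sum_apply, Pi.single_apply]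
  calc f x = f (∑ i, x i • (Pi.single i 1 : Fin d → ℝ)) := by rw [← hx]
    _ = ∑ i, x i * f (Pi.single i 1) := by
        rw [map_sum]; simp [smul_eq_mul]

lemma sep_lemma' (d : ℕ) (A : Set (Fin d → ℝ))
    (hclosed : IsClosed A) (hconv : Convex ℝ A)
    (hpos : ∀ v ∈ A, ∀ i, 0 ≤ v i)
    (hzero : (0 : Fin d → ℝ) ∈ A)
    (hher : ∀ v ∈ A, ∀ u : Fin d → ℝ, (∀ i, 0 ≤ u i) → (∀ i, u i ≤ v i) → u ∈ A)
    (w : Fin d → ℝ) (hw : ∀ i, 0 ≤ w i) (hwA : w ∉ A) :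
    ∃ v : Fin d → ℝ, (∀ i, 0 ≤ v i) ∧ (∀ u ∈ A, ∑ i, v i * u i ≤ 1) ∧
      1 < ∑ i, v i * w i := by
  obtain ⟨f, s, hfA, hfw⟩ := geometric_hahn_banach_closed_point hconv hclosed hwA
  have hs0 : 0 < s := by have := hfA 0 hzero; simpa using this
  set c : Fin d → ℝ := fun i => max (f (Pi.single i 1)) 0 with hc
  have hcA : ∀ a ∈ A, ∑ i, c i * a i < s := by
    intro a ha
    set a' : Fin d → ℝ := fun i => if 0 ≤ f (Pi.single i 1) then a i else 0 with ha'
    have ha'A : a' ∈ A := by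
      apply hher a ha
      · intro i
        by_cases h : 0 ≤ f (Pi.single i 1) <;> simp [ha', h, hpos a ha i]
      · intro i
        by_cases h : 0 ≤ f (Pi.single i 1) <;> simp [ha', h, hpos a ha i]
    have key : ∑ i, c i * a i = f a' := by
      rw [pi_repr' d a' f]
      apply Finset.sum_congr rfl
      intro i _
      by_cases h : 0 ≤ f (Pi.single i 1)
      · simp [hc, ha', h, max_eq_left h, mul_comm]
      · simp [hc, ha', h, max_eq_right (le_of_not_ge h)]
    rw [key]; exact hfA a' ha'A
  have hcw : s < ∑ i, c i * w i := by
    have h1 : f w ≤ ∑ i, c i * w i := by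
      rw [pi_repr' d w f]
      apply Finset.sum_le_sum
      intro i _
      rw [mul_comm (c i) (w i)]
      exact mul_le_mul_of_nonneg_left (le_max_left _ _) (hw i)
    linarith
  refine ⟨fun i => c i / s, fun i => div_nonneg (le_max_right _ _) hs0.le, ?_, ?_⟩
  · intro u hu
    have h := (hcA u hu).le
    calc ∑ i, c i / s * u i = (∑ i, c i * u i) / s := by
          simp only [div_mul_eq_mul_div, ← Finset.sum_div]
      _ ≤ 1 := (div_le_one hs0).2 h
  · calc (1:ℝ) < (∑ i, c i * w i) / s := (one_lt_div hs0).2 hcw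
      _ = ∑ i, c i / s * w i := by simp only [div_mul_eq_mul_div, ← Finset.sum_div]



/-- For a convex corner `A` in ℝ^d with `A ≠ ℝ^d₊` and non-empty interior,
`M(A) = 1/N(A) = γ(A^♭)`. -/
theorem convexCorner_M_eq_inv_N_eq_gamma_flat (d : ℕ) (A : Set (Fin d → ℝ))
    (hne : A.Nonempty) (hclosed : IsClosed A) (hconv : Convex ℝ A)
    (hpos : ∀ v ∈ A, ∀ i, 0 ≤ v i)
    (hher : ∀ v ∈ A, ∀ u : Fin d → ℝ, (∀ i, 0 ≤ u i) → (∀ i, u i ≤ v i) → u ∈ A)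
    (hproper : A ≠ {v : Fin d → ℝ | ∀ i, 0 ≤ v i}) (hint : (interior A).Nonempty) :
    sInf {t | ∃ (k : ℕ) (l : Fin k → ℝ) (v : Fin k → (Fin d → ℝ)),
        (∀ i, 0 < l i) ∧ (∀ i, v i ∈ A) ∧ (∀ j, 1 ≤ ∑ i, l i * v i j) ∧ t = ∑ i, l i}
      = (sSup {β : ℝ | 0 ≤ β ∧ (fun _ => β) ∈ A})⁻¹ ∧
    sInf {t | ∃ (k : ℕ) (l : Fin k → ℝ) (v : Fin k → (Fin d → ℝ)),
        (∀ i, 0 < l i) ∧ (∀ i, v i ∈ A) ∧ (∀ j, 1 ≤ ∑ i, l i * v i j) ∧ t = ∑ i, l i}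
      = sSup {t : ℝ | ∃ v : Fin d → ℝ,
          ((∀ i, 0 ≤ v i) ∧ ∀ u ∈ A, ∑ i, v i * u i ≤ 1) ∧ t = ∑ i, v i} := by
  have hzero : (0 : Fin d → ℝ) ∈ A := by
    obtain ⟨a, ha⟩ := hne
    exact hher a ha 0 (fun i => le_refl 0) (fun i => hpos a ha i)
  -- d is positive
  have hd : 0 < d := by
    rcases Nat.eq_zero_or_pos d with h | h
    · exfalso; apply hproper; subst h
      apply Set.eq_of_subset_of_subset (fun v hv i => hpos v hv i)
      intro v _
      have : v = 0 := funext fun i => i.elim0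
      rw [this]; exact hzero
    · exact h
  -- a small positive diagonal point
  obtain ⟨x, hx⟩ := hint
  obtain ⟨ε, hε, hball⟩ := Metric.isOpen_iff.1 isOpen_interior x hx
  set δ : ℝ := ε / 2 with hδdef
  have hδpos : 0 < δ := by positivity
  have hδA : (fun _ => δ : Fin d → ℝ) ∈ A := by
    have hy : (fun i => x i + δ) ∈ A := by
      apply interior_subset (hball ?_)
      rw [Metric.mem_ball, dist_pi_lt_iff hε]
      intro i
      simp only [Real.dist_eq, add_sub_cancel_left]
      rw [abs_of_pos hδpos]
      exact half_lt_self hε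
    exact hher _ hy _ (fun i => hδpos.le)
      (fun i => le_add_of_nonneg_left (hpos x (interior_subset hx) i))
  -- the set defining N
  set SN : Set ℝ := {β : ℝ | 0 ≤ β ∧ (fun _ => β) ∈ A} with hSNdef
  have hSNne : SN.Nonempty := ⟨δ, hδpos.le, hδA⟩
  have hSNbdd : BddAbove SN := by
    by_contra hb
    apply hproper
    apply Set.eq_of_subset_of_subset (fun v hv i => hpos v hv i)
    intro v hv
    obtain ⟨β, hβ, hβv⟩ := not_bddAbove_iff.1 hb (∑ i, v i)
    refine hher _ hβ.2 v hv (fun i => le_of_lt (lt_of_le_of_lt ?_ hβv))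
    exact Finset.single_le_sum (fun j _ => hv j) (Finset.mem_univ i)
  have hSNclosed : IsClosed SN := by
    have : SN = Set.Ici (0:ℝ) ∩ ((fun β : ℝ => (fun _ => β : Fin d → ℝ)) ⁻¹' A) := by
      ext β; simp [hSNdef, Set.mem_Ici]
    rw [this]
    exact isClosed_Ici.inter (hclosed.preimage (continuous_pi fun i => continuous_id))
  have hNmem : sSup SN ∈ SN := hSNclosed.csSup_mem hSNne hSNbdd
  have hNpos : 0 < sSup SN := lt_of_lt_of_le hδpos (le_csSup hSNbdd ⟨hδpos.le, hδA⟩)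
  set N : ℝ := sSup SN with hNdef
  -- lower bound for M
  set SM : Set ℝ := {t | ∃ (k : ℕ) (l : Fin k → ℝ) (v : Fin k → (Fin d → ℝ)),
        (∀ i, 0 < l i) ∧ (∀ i, v i ∈ A) ∧ (∀ j, 1 ≤ ∑ i, l i * v i j) ∧ t = ∑ i, l i}
    with hSMdef
  have hlow : ∀ t ∈ SM, N⁻¹ ≤ t := by
    rintro t ⟨k, l, v, hl, hv, hge, rfl⟩
    have hk : 0 < k := by
      rcases Nat.eq_zero_or_pos k with h | h
      · exfalso; subst h
        have h10 : (1:ℝ) ≤ 0 := by simpa using hge ⟨0, hd⟩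
        linarith
      · exact h
    have hS : 0 < ∑ i, l i := Finset.sum_pos (fun i _ => hl i) ⟨⟨0, hk⟩, Finset.mem_univ _⟩
    set S : ℝ := ∑ i, l i with hSdef
    have hp : (∑ i, (l i / S) • v i) ∈ A := by
      apply hconv.sum_mem (fun i _ => div_nonneg (hl i).le hS.le)
      · rw [← Finset.sum_div]; exact div_self hS.ne'
      · exact fun i _ => hv i
    have hq : (fun _ => S⁻¹ : Fin d → ℝ) ∈ A := by
      apply hher _ hp _ (fun i => by positivity)
      intro j
      have heq : (∑ i, (l i / S) • v i) j = S⁻¹ * ∑ i, l i * v i j := by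
        rw [Finset.sum_apply, Finset.mul_sum]
        apply Finset.sum_congr rfl
        intro i _
        simp [div_mul_eq_mul_div, div_eq_mul_inv, mul_comm, mul_assoc, mul_left_comm]
      rw [heq]
      calc S⁻¹ = S⁻¹ * 1 := (mul_one _).symm
        _ ≤ S⁻¹ * ∑ i, l i * v i j :=
            mul_le_mul_of_nonneg_left (hge j) (by positivity)
    have hmem : S⁻¹ ∈ SN := ⟨by positivity, hq⟩
    have h1 : S⁻¹ ≤ N := le_csSup hSNbdd hmem
    have h2 : N⁻¹ ≤ (S⁻¹)⁻¹ := by gcongr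
    rwa [inv_inv] at h2
  have hmemM : N⁻¹ ∈ SM := by
    refine ⟨1, fun _ => N⁻¹, fun _ _ => N, fun i => by positivity,
      fun i => hNmem.2, fun j => ?_, by simp⟩
    simp [inv_mul_cancel₀ hNpos.ne']
  have hMinf : sInf SM = N⁻¹ :=
    le_antisymm (csInf_le ⟨N⁻¹, hlow⟩ hmemM) (le_csInf ⟨N⁻¹, hmemM⟩ hlow)
  -- the gamma set
  set T : Set ℝ := {t : ℝ | ∃ v : Fin d → ℝ,
          ((∀ i, 0 ≤ v i) ∧ ∀ u ∈ A, ∑ i, v i * u i ≤ 1) ∧ t = ∑ i, v i} with hTdef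
  have hTne : T.Nonempty := ⟨0, 0, ⟨fun i => le_refl 0, fun u _ => by simp⟩, by simp⟩
  have hTbdd : BddAbove T := by
    refine ⟨δ⁻¹, ?_⟩
    rintro t ⟨v, ⟨hv0, hvA⟩, rfl⟩
    have h := hvA _ hδA
    rw [← Finset.sum_mul] at h
    rw [inv_eq_one_div]
    exact (le_div_iff₀ hδpos).2 h
  obtain ⟨w, hw, hwA⟩ : ∃ w : Fin d → ℝ, (∀ i, 0 ≤ w i) ∧ w ∉ A := by
    by_contra h
    push_neg at h
    apply hproper
    exact Set.eq_of_subset_of_subset (fun v hv i => hpos v hv i) (fun v hv => h v hv)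
  obtain ⟨v₀, hv₀0, hv₀A, hv₀w⟩ := sep_lemma' d A hclosed hconv hpos hzero hher w hw hwA
  have hv₀T : (∑ i, v₀ i) ∈ T := ⟨v₀, ⟨hv₀0, hv₀A⟩, rfl⟩
  have hsum_pos : 0 < ∑ i, v₀ i := by
    rcases (Finset.sum_nonneg (fun i (_ : i ∈ Finset.univ) => hv₀0 i)).lt_or_eq with h | h
    · exact h
    · exfalso
      have hz := (Finset.sum_eq_zero_iff_of_nonneg (fun i _ => hv₀0 i)).1 h.symm
      have : ∑ i, v₀ i * w i = 0 :=
        Finset.sum_eq_zero fun i _ => by rw [hz i (Finset.mem_univ i), zero_mul]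
      linarith
  have hgpos : 0 < sSup T := lt_of_lt_of_le hsum_pos (le_csSup hTbdd hv₀T)
  set g : ℝ := sSup T with hgdef
  have hgA : (fun _ => g⁻¹ : Fin d → ℝ) ∈ A := by
    by_contra hnA
    obtain ⟨v, hv0, hvA, hvw⟩ := sep_lemma' d A hclosed hconv hpos hzero hher _
      (fun i => by positivity) hnA
    simp only [← div_eq_mul_inv, ← Finset.sum_div] at hvw
    have h2 : g < ∑ i, v i := (one_lt_div hgpos).1 hvw
    exact absurd (le_csSup hTbdd ⟨v, ⟨hv0, hvA⟩, rfl⟩) (not_le.2 h2)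
  have hNg : N⁻¹ ≤ g := by
    have h1 : g⁻¹ ≤ N := le_csSup hSNbdd ⟨by positivity, hgA⟩
    have h2 : N⁻¹ ≤ (g⁻¹)⁻¹ := by gcongr
    rwa [inv_inv] at h2
  have hgN : g ≤ N⁻¹ := by
    apply csSup_le hTne
    rintro t ⟨v, ⟨hv0, hvA⟩, rfl⟩
    have h := hvA _ hNmem.2
    rw [← Finset.sum_mul] at h
    rw [inv_eq_one_div]
    exact (le_div_iff₀ hNpos).2 h
  have hg : g = N⁻¹ := le_antisymm hgN hNg
  exact ⟨hMinf, hMinf.trans hg.symm⟩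
end

section
/- A convex corner 𝒜 in M_d has non-empty relative interior (in M_d^+) if and only if rI ∈ 𝒜 for some r > 0, if and only if for every non-zero vector v ∈ ℂ^d there exists s > 0 with s·vv* ∈ 𝒜, if and only if 𝒜 contains a positive definite element. -/
open Matrix
open scoped ComplexOrder

/-- The anti-blocker `A^♯ = {N ∈ M_d^+ : Tr(NM) ≤ 1 for all M ∈ A}`. -/
def mSharp {d : ℕ} (A : Set (Matrix (Fin d) (Fin d) ℂ)) : Set (Matrix (Fin d) (Fin d) ℂ) :=
  {N | N.PosSemidef ∧ ∀ M ∈ A, ((N * M).trace).re ≤ 1}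

/-- Hereditarity with respect to the Loewner order within `M_d^+`. -/
def mHered {d : ℕ} (A : Set (Matrix (Fin d) (Fin d) ℂ)) : Prop :=
  ∀ B ∈ A, ∀ M : Matrix (Fin d) (Fin d) ℂ, M.PosSemidef → (B - M).PosSemidef → M ∈ A

/-- A convex `M_d`-corner: a non-empty closed convex hereditary subset of `M_d^+`. -/
def mCorner {d : ℕ} (A : Set (Matrix (Fin d) (Fin d) ℂ)) : Prop :=
  A.Nonempty ∧ (∀ M ∈ A, M.PosSemidef) ∧ IsClosed A ∧ Convex ℝ A ∧ mHered A

/-- The hereditary cover `her(B) = {M ∈ M_d^+ : ∃ N ∈ B, M ≤ N}`. -/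
def mHer {d : ℕ} (B : Set (Matrix (Fin d) (Fin d) ℂ)) : Set (Matrix (Fin d) (Fin d) ℂ) :=
  {M | M.PosSemidef ∧ ∃ N ∈ B, (N - M).PosSemidef}

/-- Boundedness of a set of matrices (in any, equivalently every, norm). -/
def mBounded {d : ℕ} (A : Set (Matrix (Fin d) (Fin d) ℂ)) : Prop :=
  ∃ c : ℝ, ∀ M ∈ A, ∀ i j, ‖M i j‖ ≤ c

/-- Non-empty relative interior within `M_d^+`. -/
def mRelIntNonempty {d : ℕ} (A : Set (Matrix (Fin d) (Fin d) ℂ)) : Prop :=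
  ∃ M ∈ A, A ∈ nhdsWithin M {N : Matrix (Fin d) (Fin d) ℂ | N.PosSemidef}


namespace McornerAux

variable {d : ℕ}

lemma smul_one_eq_diag (r : ℝ) :
    r • (1 : Matrix (Fin d) (Fin d) ℂ) = Matrix.diagonal (fun _ => (r : ℂ)) := by
  ext i j
  by_cases h : i = j <;>
    simp [Matrix.one_apply, Matrix.diagonal_apply, h, Complex.real_smul]

lemma smul_one_psd {r : ℝ} (hr : 0 ≤ r) :
    (r • (1 : Matrix (Fin d) (Fin d) ℂ)).PosSemidef := by
  rw [smul_one_eq_diag]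
  exact Matrix.PosSemidef.diagonal fun i => Complex.zero_le_real.mpr hr

lemma psd_of_re {M : Matrix (Fin d) (Fin d) ℂ} (hH : M.IsHermitian)
    (h : ∀ x : Fin d → ℂ, 0 ≤ (dotProduct (star x) (M *ᵥ x)).re) :
    M.PosSemidef := by
  refine posSemidef_iff_dotProduct_mulVec.mpr ⟨hH, fun x => ?_⟩
  have hself : star (dotProduct (star x) (M *ᵥ x))
      = dotProduct (star x) (M *ᵥ x) := by
    conv_lhs => rw [star_dotProduct, star_star, star_mulVec,
      ← dotProduct_mulVec, hH.eq]
  rw [Complex.nonneg_iff]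
  refine ⟨h x, ?_⟩
  exact (Complex.conj_eq_iff_im.mp hself).symm

lemma dot_self (x : Fin d → ℂ) :
    dotProduct (star x) x = ((∑ i, ‖x i‖ ^ 2 : ℝ) : ℂ) := by
  push_cast
  simp only [dotProduct, Pi.star_apply]
  refine Finset.sum_congr rfl fun i _ => ?_
  rw [Complex.star_def, mul_comm, Complex.mul_conj, Complex.normSq_eq_norm_sq]
  push_cast
  rfl

lemma cs_abs (v x : Fin d → ℂ) :
    ‖dotProduct (star v) x‖ ^ 2
      ≤ (∑ i, ‖v i‖ ^ 2) * (∑ i, ‖x i‖ ^ 2) := by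
  have h1 : ‖dotProduct (star v) x‖
      ≤ ∑ i, ‖v i‖ * ‖x i‖ := by
    refine (norm_sum_le _ _).trans (le_of_eq ?_)
    refine Finset.sum_congr rfl fun i _ => ?_
    simp [_root_.map_mul]
  calc ‖dotProduct (star v) x‖ ^ 2
      ≤ (∑ i, ‖v i‖ * ‖x i‖) ^ 2 := by
        exact pow_le_pow_left₀ (norm_nonneg _) h1 2
    _ ≤ _ := Finset.sum_mul_sq_le_sq_mul_sq _ _ _

lemma quad_smul_one (r : ℝ) (x : Fin d → ℂ) :
    dotProduct (star x) ((r • (1 : Matrix (Fin d) (Fin d) ℂ)) *ᵥ x)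
      = ((r * ∑ i, ‖x i‖ ^ 2 : ℝ) : ℂ) := by
  rw [smul_mulVec, Matrix.one_mulVec, dotProduct_smul, dot_self]
  push_cast
  rw [Complex.real_smul]

lemma quad_vecMulVec (v x : Fin d → ℂ) :
    dotProduct (star x) ((Matrix.vecMulVec v (star v)) *ᵥ x)
      = ((‖dotProduct (star v) x‖ ^ 2 : ℝ) : ℂ) := by
  have : dotProduct (star x) ((Matrix.vecMulVec v (star v)) *ᵥ x)
      = (∑ i, (starRingEnd ℂ) (x i) * v i) * (∑ j, (starRingEnd ℂ) (v j) * x j) := by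
    rw [Finset.sum_mul_sum]
    simp only [dotProduct, Matrix.mulVec, Matrix.vecMulVec_apply, Pi.star_apply,
      dotProduct, Complex.star_def, Finset.mul_sum]
    refine Finset.sum_congr rfl fun i _ => Finset.sum_congr rfl fun j _ => by ring
  rw [this]
  have h2 : (∑ i, (starRingEnd ℂ) (x i) * v i)
      = (starRingEnd ℂ) (∑ j, (starRingEnd ℂ) (v j) * x j) := by
    rw [map_sum]
    refine Finset.sum_congr rfl fun j _ => by
      rw [_root_.map_mul, Complex.conj_conj, mul_comm]
  rw [h2, mul_comm, Complex.mul_conj, Complex.normSq_eq_norm_sq]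
  norm_cast

lemma abs_quad_le {E : Matrix (Fin d) (Fin d) ℂ} {ε : ℝ}
    (hE : ∀ i j, ‖E i j‖ ≤ ε) (x : Fin d → ℂ) :
    ‖dotProduct (star x) (E *ᵥ x)‖
      ≤ ε * (∑ i, ‖x i‖) ^ 2 := by
  have h1 : ‖dotProduct (star x) (E *ᵥ x)‖
      ≤ ∑ i, ∑ j, ‖x i‖ * ε * ‖x j‖ := by
    simp only [dotProduct, Matrix.mulVec, Pi.star_apply, Finset.mul_sum]
    refine (norm_sum_le _ _).trans ?_
    refine Finset.sum_le_sum fun i _ => ?_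
    refine (norm_sum_le _ _).trans ?_
    refine Finset.sum_le_sum fun j _ => ?_
    rw [norm_mul, norm_mul, Complex.star_def, Complex.norm_conj]
    have h2 : ‖x i‖ * (‖E i j‖ * ‖x j‖)
        ≤ ‖x i‖ * (ε * ‖x j‖) := by
      refine mul_le_mul_of_nonneg_left ?_ (norm_nonneg _)
      exact mul_le_mul_of_nonneg_right (hE i j) (norm_nonneg _)
    calc ‖x i‖ * (‖E i j‖ * ‖x j‖) ≤ _ := h2
      _ = ‖x i‖ * ε * ‖x j‖ := by ring
  refine h1.trans (le_of_eq ?_)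
  rw [sq, Finset.sum_mul_sum]
  rw [Finset.mul_sum]
  refine Finset.sum_congr rfl fun i _ => ?_
  rw [Finset.mul_sum]
  refine Finset.sum_congr rfl fun j _ => by ring

lemma sub_psd_of_close {r : ℝ} (hr : 0 < r) {N : Matrix (Fin d) (Fin d) ℂ}
    (hN : N.PosSemidef)
    (hc : ∀ i j, ‖N i j - (((r/2) • (1 : Matrix (Fin d) (Fin d) ℂ))) i j‖ ≤ r / (2 * (d + 1))) :
    (r • (1 : Matrix (Fin d) (Fin d) ℂ) - N).PosSemidef := by
  set ε := r / (2 * (d + 1)) with hε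
  refine psd_of_re (((smul_one_psd hr.le).1).sub hN.1) fun x => ?_
  set S := ∑ i, ‖x i‖ ^ 2 with hS
  set T := ∑ i, ‖x i‖ with hT
  have hSnn : 0 ≤ S := Finset.sum_nonneg fun i _ => sq_nonneg _
  have hT2 : T ^ 2 ≤ (d : ℝ) * S := by
    rw [hT, hS]
    have := sq_sum_le_card_mul_sum_sq (s := (Finset.univ : Finset (Fin d)))
      (f := fun i => ‖x i‖)
    simpa using this
  have hEq : dotProduct (star x) ((r • (1 : Matrix (Fin d) (Fin d) ℂ) - N) *ᵥ x)
      = ((r * S : ℝ) : ℂ) - ((r/2 * S : ℝ) : ℂ)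
        - dotProduct (star x) ((N - (r/2) • (1 : Matrix (Fin d) (Fin d) ℂ)) *ᵥ x) := by
    rw [Matrix.sub_mulVec, dotProduct_sub, Matrix.sub_mulVec, dotProduct_sub,
      quad_smul_one, quad_smul_one]
    ring
  rw [hEq]
  simp only [Complex.sub_re, Complex.ofReal_re]
  have habs : |(dotProduct (star x)
      ((N - (r/2) • (1 : Matrix (Fin d) (Fin d) ℂ)) *ᵥ x)).re| ≤ ε * T ^ 2 := by
    refine (Complex.abs_re_le_norm _).trans ?_
    refine (abs_quad_le (fun i j => ?_) x).trans le_rfl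
    simpa using hc i j
  have hre := abs_le.mp habs |>.2
  have hεT : ε * T ^ 2 ≤ r / 2 * S := by
    have h1 : ε * T ^ 2 ≤ ε * ((d : ℝ) * S) := by
      refine mul_le_mul_of_nonneg_left hT2 ?_
      rw [hε]; positivity
    refine h1.trans ?_
    rw [hε]
    rw [div_mul_eq_mul_div, div_le_iff₀ (by positivity)]
    nlinarith [mul_nonneg hr.le hSnn]
  nlinarith [hre, hεT]

lemma posDef_sub_smul (hd : 0 < d) {M : Matrix (Fin d) (Fin d) ℂ} (hM : M.PosDef) :
    ∃ r : ℝ, 0 < r ∧ (M - r • (1 : Matrix (Fin d) (Fin d) ℂ)).PosSemidef := by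
  have hH := hM.1
  have hne : (Finset.univ : Finset (Fin d)).Nonempty := ⟨⟨0, hd⟩, Finset.mem_univ _⟩
  obtain ⟨i₀, -, hmin⟩ := Finset.exists_min_image Finset.univ hH.eigenvalues hne
  set r := hH.eigenvalues i₀ with hrdef
  set U : Matrix (Fin d) (Fin d) ℂ := (hH.eigenvectorUnitary : Matrix (Fin d) (Fin d) ℂ) with hU
  refine ⟨r, hM.eigenvalues_pos i₀, ?_⟩
  have hUU : U * star U = 1 := Matrix.mem_unitaryGroup_iff.mp hH.eigenvectorUnitary.2
  have key : M - r • (1 : Matrix (Fin d) (Fin d) ℂ)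
      = U * Matrix.diagonal (fun i => ((hH.eigenvalues i - r : ℝ) : ℂ)) * star U := by
    conv_lhs => rw [hH.spectral_theorem, smul_one_eq_diag]
    have h1 : Matrix.diagonal (fun i => ((hH.eigenvalues i - r : ℝ) : ℂ))
        = Matrix.diagonal (RCLike.ofReal ∘ hH.eigenvalues)
          - Matrix.diagonal (fun _ => (r : ℂ)) := by
      rw [Matrix.diagonal_sub]
      congr 1
      funext i
      push_cast
      simp [RCLike.ofReal]
    have h2 : Matrix.diagonal (fun _ : Fin d => (r : ℂ)) = (r : ℂ) • 1 := by
      rw [← smul_one_eq_diag]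
      ext i j
      simp [Complex.real_smul]
    rw [h1, Matrix.mul_sub, Matrix.sub_mul]
    congr 1
    rw [h2, Matrix.mul_smul, mul_one, Matrix.smul_mul, hUU]
  rw [key]
  have hpsd : (Matrix.diagonal (fun i => ((hH.eigenvalues i - r : ℝ) : ℂ))).PosSemidef :=
    Matrix.PosSemidef.diagonal fun i =>
      Complex.zero_le_real.mpr (sub_nonneg.mpr (hmin i (Finset.mem_univ i)))
  simpa [Matrix.star_eq_conjTranspose] using hpsd.mul_mul_conjTranspose_same U

lemma herm_vvt (v : Fin d → ℂ) : (Matrix.vecMulVec v (star v)).IsHermitian := by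
  show _ = _
  ext i j
  simp only [Matrix.conjTranspose_apply, Matrix.vecMulVec_apply, Pi.star_apply, star_mul',
    star_star]
  ring

lemma smul_quad (s : ℝ) (B : Matrix (Fin d) (Fin d) ℂ) (x : Fin d → ℂ) :
    dotProduct (star x) ((s • B) *ᵥ x)
      = s • dotProduct (star x) (B *ᵥ x) := by
  rw [smul_mulVec, dotProduct_smul]

lemma sub_vvt_psd {r : ℝ} (hr : 0 < r) {v : Fin d → ℂ} (hv : v ≠ 0) :
    let W := ∑ i, ‖v i‖ ^ 2
    (r • (1 : Matrix (Fin d) (Fin d) ℂ)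
      - (r / W) • Matrix.vecMulVec v (star v)).PosSemidef := by
  intro W
  have hW : 0 < W := by
    obtain ⟨i, hi⟩ := Function.ne_iff.mp hv
    exact Finset.sum_pos' (fun j _ => sq_nonneg _)
      ⟨i, Finset.mem_univ i, pow_pos (norm_pos_iff.mpr hi) 2⟩
  have hherm : (r • (1 : Matrix (Fin d) (Fin d) ℂ)
      - (r / W) • Matrix.vecMulVec v (star v)).IsHermitian := by
    refine ((smul_one_psd hr.le).1).sub ?_
    show _ = _
    rw [Matrix.conjTranspose_smul, (herm_vvt v).eq, star_trivial]
  refine psd_of_re hherm fun x => ?_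
  rw [Matrix.sub_mulVec, dotProduct_sub, quad_smul_one, smul_quad, quad_vecMulVec]
  set S := ∑ i, ‖x i‖ ^ 2 with hS
  set c2 := ‖dotProduct (star v) x‖ ^ 2 with hc2
  have : ((r * S : ℝ) : ℂ) - (r / W) • ((c2 : ℝ) : ℂ) = ((r * S - r / W * c2 : ℝ) : ℂ) := by
    rw [Complex.real_smul]
    push_cast
    ring
  rw [this, Complex.ofReal_re]
  have hcs : c2 ≤ W * S := cs_abs v x
  have := mul_le_mul_of_nonneg_left hcs (le_of_lt (div_pos hr hW))
  have hWne : W ≠ 0 := hW.ne'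
  nlinarith [div_mul_cancel₀ r hWne]

lemma smul_vvt_psd {s : ℝ} (hs : 0 ≤ s) (v : Fin d → ℂ) :
    (s • Matrix.vecMulVec v (star v)).PosSemidef := by
  have hherm : (s • Matrix.vecMulVec v (star v)).IsHermitian := by
    show _ = _
    rw [Matrix.conjTranspose_smul, (herm_vvt v).eq, star_trivial]
  refine psd_of_re hherm fun x => ?_
  rw [smul_quad, quad_vecMulVec, Complex.real_smul]
  rw [← Complex.ofReal_mul, Complex.ofReal_re]
  positivity

lemma vvt_single (i : Fin d) :
    Matrix.vecMulVec (Pi.single i (1:ℂ)) (star (Pi.single i (1:ℂ)))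
      = Matrix.diagonal (Pi.single i (1:ℂ)) := by
  ext j k
  simp only [Matrix.vecMulVec_apply, Pi.star_apply, Matrix.diagonal_apply, Pi.single_apply]
  by_cases hj : j = i <;> by_cases hk : k = i <;> by_cases hjk : j = k <;>
    simp_all <;> simp_all

end McornerAux

open McornerAux

/-- A convex corner in `M_d` has non-empty relative interior iff `r • I ∈ A`
for some `r > 0`, iff for every non-zero `v` some positive multiple of `vv*` lies in `A`,
iff `A` contains a positive definite element. -/
theorem mCorner_relInt_iff {d : ℕ} (A : Set (Matrix (Fin d) (Fin d) ℂ)) (hA : mCorner A) :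
    (mRelIntNonempty A ↔ ∃ r : ℝ, 0 < r ∧ r • (1 : Matrix (Fin d) (Fin d) ℂ) ∈ A) ∧
    (mRelIntNonempty A ↔ ∀ v : Fin d → ℂ, v ≠ 0 →
        ∃ s : ℝ, 0 < s ∧ s • Matrix.vecMulVec v (star v) ∈ A) ∧
    (mRelIntNonempty A ↔ ∃ M ∈ A, M.PosDef) := by
  obtain ⟨hne, hpsd, hclosed, hconv, hher⟩ := hA
  -- R → P1
  have h1 : mRelIntNonempty A → ∃ r : ℝ, 0 < r ∧ r • (1 : Matrix (Fin d) (Fin d) ℂ) ∈ A := by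
    rintro ⟨M, hM, hnhds⟩
    rw [mem_nhdsWithin] at hnhds
    obtain ⟨U, hUopen, hMU, hUsub⟩ := hnhds
    have hcont : Continuous fun t : ℝ => M + t • (1 : Matrix (Fin d) (Fin d) ℂ) := by
      fun_prop
    have hpre : (fun t : ℝ => M + t • (1 : Matrix (Fin d) (Fin d) ℂ)) ⁻¹' U ∈ nhds (0 : ℝ) := by
      refine hcont.continuousAt.preimage_mem_nhds ?_
      simpa using hUopen.mem_nhds hMU
    obtain ⟨δ, hδ, hball⟩ := Metric.mem_nhds_iff.mp hpre
    set t := δ / 2 with ht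
    have htpos : 0 < t := by positivity
    have hmem : M + t • (1 : Matrix (Fin d) (Fin d) ℂ) ∈ U := by
      apply hball
      rw [Metric.mem_ball, Real.dist_eq, sub_zero, ht, abs_of_pos (by positivity : (0:ℝ) < δ/2)]
      linarith
    have hMt : M + t • (1 : Matrix (Fin d) (Fin d) ℂ) ∈ A := by
      refine hUsub ⟨hmem, ?_⟩
      exact (hpsd M hM).add (smul_one_psd htpos.le)
    refine ⟨t, htpos, ?_⟩
    refine hher _ hMt _ (smul_one_psd htpos.le) ?_
    simpa using hpsd M hM
  -- P1 → R
  have h2 : (∃ r : ℝ, 0 < r ∧ r • (1 : Matrix (Fin d) (Fin d) ℂ) ∈ A) → mRelIntNonempty A := by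
    rintro ⟨r, hr, hrA⟩
    set M₀ : Matrix (Fin d) (Fin d) ℂ := (r / 2) • 1 with hM₀
    have hM₀A : M₀ ∈ A := by
      refine hher _ hrA _ (smul_one_psd (by positivity)) ?_
      have : r • (1 : Matrix (Fin d) (Fin d) ℂ) - (r / 2) • 1 = (r / 2) • 1 := by
        rw [← sub_smul]; congr 1; ring
      rw [hM₀, this]
      exact smul_one_psd (by positivity)
    set ε := r / (2 * (d + 1)) with hε
    have hεpos : 0 < ε := by positivity
    refine ⟨M₀, hM₀A, ?_⟩
    rw [mem_nhdsWithin]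
    refine ⟨{N : Matrix (Fin d) (Fin d) ℂ | ∀ i j, ‖N i j - M₀ i j‖ < ε},
      ?_, fun i j => by simpa using hεpos, ?_⟩
    · have heq : {N : Matrix (Fin d) (Fin d) ℂ | ∀ i j, ‖N i j - M₀ i j‖ < ε}
          = ⋂ i, ⋂ j, (fun N : Matrix (Fin d) (Fin d) ℂ => N i j) ⁻¹'
            Metric.ball (M₀ i j) ε := by
        ext N
        simp [Metric.mem_ball, Complex.dist_eq]
      rw [heq]
      exact isOpen_iInter_of_finite fun i => isOpen_iInter_of_finite fun j =>
        Metric.isOpen_ball.preimage ((continuous_apply j).comp (continuous_apply i))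
    · rintro N ⟨hNU, hNpsd⟩
      refine hher _ hrA _ hNpsd ?_
      exact sub_psd_of_close hr hNpsd fun i j => (hNU i j).le
  -- P1 → P2
  have h3 : (∃ r : ℝ, 0 < r ∧ r • (1 : Matrix (Fin d) (Fin d) ℂ) ∈ A) →
      ∀ v : Fin d → ℂ, v ≠ 0 → ∃ s : ℝ, 0 < s ∧ s • Matrix.vecMulVec v (star v) ∈ A := by
    rintro ⟨r, hr, hrA⟩ v hv
    set W := ∑ i, ‖v i‖ ^ 2 with hW
    have hWpos : 0 < W := by
      obtain ⟨i, hi⟩ := Function.ne_iff.mp hv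
      exact Finset.sum_pos' (fun j _ => sq_nonneg _)
        ⟨i, Finset.mem_univ i, pow_pos (norm_pos_iff.mpr hi) 2⟩
    refine ⟨r / W, by positivity, ?_⟩
    exact hher _ hrA _ (smul_vvt_psd (by positivity) v) (sub_vvt_psd hr hv)
  -- P2 → P3
  have h4 : (∀ v : Fin d → ℂ, v ≠ 0 → ∃ s : ℝ, 0 < s ∧ s • Matrix.vecMulVec v (star v) ∈ A) →
      ∃ M ∈ A, M.PosDef := by
    intro hP2
    rcases Nat.eq_zero_or_pos d with rfl | hd
    · obtain ⟨M, hM⟩ := hne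
      refine ⟨M, hM, (hpsd M hM).1, fun x hx => absurd ?_ hx⟩
      ext i; exact i.elim0
    · have hsingle : ∀ i : Fin d, (Pi.single i (1:ℂ) : Fin d → ℂ) ≠ 0 := by
        intro i h
        have := congrFun h i
        simp at this
      choose s hs hsA using fun i => hP2 (Pi.single i (1:ℂ)) (hsingle i)
      have hz : ∀ i : Fin d, s i • Matrix.diagonal (Pi.single i (1:ℂ)) ∈ A := by
        intro i
        have := hsA i
        rwa [vvt_single] at this
      have hmem : ∑ i : Fin d, (d : ℝ)⁻¹ • (s i • Matrix.diagonal (Pi.single i (1:ℂ))) ∈ A := by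
        refine hconv.sum_mem (fun i _ => by positivity) ?_ (fun i _ => hz i)
        rw [Finset.sum_const, Finset.card_univ, Fintype.card_fin, nsmul_eq_mul]
        field_simp
      have hCeq : ∑ i : Fin d, (d : ℝ)⁻¹ • (s i • Matrix.diagonal (Pi.single i (1:ℂ)))
          = Matrix.diagonal (fun j => (((d : ℝ)⁻¹ * s j : ℝ) : ℂ)) := by
        ext j k
        simp only [Matrix.sum_apply, Matrix.smul_apply, Matrix.diagonal_apply, Pi.single_apply,
          smul_eq_mul, Complex.real_smul]
        by_cases hjk : j = k
        · subst hjk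
          simp only [if_pos rfl]
          rw [Finset.sum_eq_single j]
          · simp
          · intro b _ hb
            simp [if_neg (Ne.symm hb)]
          · intro h; exact absurd (Finset.mem_univ j) h
        · simp [if_neg hjk]
      rw [hCeq] at hmem
      refine ⟨_, hmem, Matrix.PosDef.diagonal fun j => ?_⟩
      refine Complex.zero_lt_real.mpr ?_
      have := hs j
      positivity
  -- P3 → P1
  have h5 : (∃ M ∈ A, M.PosDef) →
      ∃ r : ℝ, 0 < r ∧ r • (1 : Matrix (Fin d) (Fin d) ℂ) ∈ A := by
    rintro ⟨M, hM, hMpd⟩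
    rcases Nat.eq_zero_or_pos d with rfl | hd
    · refine ⟨1, one_pos, ?_⟩
      have : (1:ℝ) • (1 : Matrix (Fin 0) (Fin 0) ℂ) = M := by
        ext i j; exact i.elim0
      rwa [this]
    · obtain ⟨r, hr, hsub⟩ := posDef_sub_smul hd hMpd
      exact ⟨r, hr, hher _ hM _ (smul_one_psd hr.le) hsub⟩
  -- P1 → P3
  have h6 : (∃ r : ℝ, 0 < r ∧ r • (1 : Matrix (Fin d) (Fin d) ℂ) ∈ A) →
      ∃ M ∈ A, M.PosDef := by
    rintro ⟨r, hr, hrA⟩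
    refine ⟨_, hrA, ?_⟩
    rw [smul_one_eq_diag]
    exact Matrix.PosDef.diagonal fun i => Complex.zero_lt_real.mpr hr
  exact ⟨⟨h1, h2⟩, ⟨fun hR => h3 (h1 hR), fun h => h2 (h5 (h4 h))⟩,
    ⟨fun hR => h6 (h1 hR), fun h => h2 (h5 h)⟩⟩
end

section
/- A convex corner 𝒜 in M_d has non-empty relative interior if and only if its anti-blocker 𝒜^♯ is bounded; and 𝒜 is bounded if and only if 𝒜^♯ has non-empty relative interior. -/
open Matrix
open scoped ComplexOrder

namespace MCAux

variable {d : ℕ}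

lemma smul_one_eq_diagonal (ε : ℝ) :
    (ε : ℂ) • (1 : Matrix (Fin d) (Fin d) ℂ) = diagonal (fun _ => (ε : ℂ)) := by
  ext i j
  simp [Matrix.one_apply, Matrix.diagonal_apply, mul_ite]

lemma posSemidef_smul_one {ε : ℝ} (hε : 0 ≤ ε) :
    ((ε : ℂ) • (1 : Matrix (Fin d) (Fin d) ℂ)).PosSemidef := by
  rw [smul_one_eq_diagonal]
  exact PosSemidef.diagonal (fun _ => Complex.zero_le_real.2 hε)

lemma diag_nonneg {M : Matrix (Fin d) (Fin d) ℂ} (hM : M.PosSemidef) (i : Fin d) :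
    0 ≤ M i i := by
  have := hM.dotProduct_mulVec_nonneg (Pi.single i 1)
  simpa [Matrix.mulVec_single, dotProduct, Pi.single_apply] using this

lemma trace_nonneg {M : Matrix (Fin d) (Fin d) ℂ} (hM : M.PosSemidef) :
    0 ≤ M.trace := by
  rw [Matrix.trace]
  exact Finset.sum_nonneg fun i _ => diag_nonneg hM i

end MCAux

namespace MCAux2
open MCAux
variable {d : ℕ}

lemma entry_abs_le_trace_re {M : Matrix (Fin d) (Fin d) ℂ} (hM : M.PosSemidef) (i j : Fin d) :
    ‖M i j‖ ≤ M.trace.re := by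
  have htr : M.trace.re = ∑ k, (M k k).re := by
    rw [Matrix.trace]
    exact Complex.re_sum _ _
  have hdiag : ∀ k, 0 ≤ (M k k).re := fun k => (Complex.le_def.1 (diag_nonneg hM k)).1
  by_cases hij : i = j
  · subst hij
    have h0 : 0 ≤ M i i := diag_nonneg hM i
    have : ‖M i i‖ = (M i i).re := by
      rw [Complex.le_def] at h0
      have heq : M i i = (((M i i).re : ℝ) : ℂ) := Complex.ext rfl (by simpa using h0.2.symm)
      rw [heq, Complex.norm_real, Real.norm_eq_abs, abs_of_nonneg h0.1]
      simp
    rw [this, htr]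
    exact Finset.single_le_sum (fun k _ => hdiag k) (Finset.mem_univ i)
  · set a : ℂ := M i j with ha_def
    by_cases ha : a = 0
    · rw [ha]
      simp only [norm_zero]
      rw [htr]
      exact Finset.sum_nonneg fun k _ => hdiag k
    · set t : ℝ := ‖a‖ with ht_def
      have ht : 0 < t := norm_pos_iff.mpr ha
      have hmc : a * star a = ((t:ℂ))^2 := by
        rw [Complex.star_def, Complex.mul_conj]
        norm_cast
        rw [ht_def, Complex.sq_norm]
      have hMji : M j i = star a := by
        rw [ha_def, ← Matrix.conjTranspose_apply, hM.1.eq]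
      set x : Fin d → ℂ := Pi.single i (t:ℂ) + Pi.single j (-(star a)) with hx_def
      have hstarx : star x = Pi.single i (t:ℂ) + Pi.single j (-a) := by
        ext k
        simp only [hx_def, Pi.star_apply, Pi.add_apply, Pi.single_apply]
        split_ifs <;> simp [Complex.star_def, Complex.conj_ofReal]
      have hq : star x ⬝ᵥ M *ᵥ x = ((t:ℂ))^2 * (M i i + M j j - 2*t) := by
        rw [hstarx, hx_def]
        rw [Matrix.mulVec_add, Matrix.mulVec_single, Matrix.mulVec_single]
        rw [add_dotProduct, single_dotProduct, single_dotProduct]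
        simp only [Pi.add_apply, Pi.smul_apply, op_smul_eq_mul, Matrix.col_apply]
        rw [hMji, ← ha_def]
        linear_combination (M j j - 2*(t:ℂ)) * hmc
      have h0 := hM.dotProduct_mulVec_nonneg x
      rw [hq] at h0
      have h0re := (Complex.le_def.1 h0).1
      have : (((t:ℂ))^2 * (M i i + M j j - 2*t)).re
          = t^2 * ((M i i).re + (M j j).re - 2*t) := by
        rw [show ((t:ℂ))^2 = ((t^2 : ℝ) : ℂ) by push_cast; ring]
        rw [Complex.re_ofReal_mul]
        simp [Complex.sub_re, Complex.add_re]
      rw [this] at h0re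
      simp only [Complex.zero_re] at h0re
      have h2 : (0:ℝ) < t^2 := by positivity
      have hkey : 2*t ≤ (M i i).re + (M j j).re := by
        by_contra hcon
        push_neg at hcon
        nlinarith [mul_pos h2 (show 0 < 2*t - ((M i i).re + (M j j).re) by linarith)]
      have hsum : (M i i).re + (M j j).re ≤ M.trace.re := by
        rw [htr]
        have : ({i, j} : Finset (Fin d)) ⊆ Finset.univ := Finset.subset_univ _
        calc (M i i).re + (M j j).re = ∑ k ∈ ({i,j} : Finset (Fin d)), (M k k).re := by
              rw [Finset.sum_pair hij]
          _ ≤ ∑ k, (M k k).re := Finset.sum_le_sum_of_subset_of_nonneg this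
              (fun k _ _ => hdiag k)
      show t ≤ M.trace.re
      linarith

end MCAux2

namespace MCAux3
open MCAux MCAux2
variable {d : ℕ}

open scoped MatrixOrder Matrix.Norms.L2Operator in
lemma trace_mul_re_nonneg {M N : Matrix (Fin d) (Fin d) ℂ}
    (hM : M.PosSemidef) (hN : N.PosSemidef) : 0 ≤ ((M * N).trace).re := by
  obtain ⟨B, rfl⟩ := CStarAlgebra.nonneg_iff_eq_star_mul_self.mp hM.nonneg
  have h2 : (B * N * Bᴴ).PosSemidef := hN.mul_mul_conjTranspose_same B
  rw [star_eq_conjTranspose, mul_assoc, Matrix.trace_mul_comm]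
  exact (Complex.le_def.1 (trace_nonneg h2)).1

lemma trace_smul_one_mul (ε : ℝ) (M : Matrix (Fin d) (Fin d) ℂ) :
    ((((ε:ℂ) • (1 : Matrix (Fin d) (Fin d) ℂ)) * M).trace).re = ε * M.trace.re := by
  rw [Matrix.smul_mul, one_mul, Matrix.trace_smul]
  simp [Complex.re_ofReal_mul]

end MCAux3

namespace MCAux4
open MCAux MCAux2 MCAux3
variable {d : ℕ}

lemma kernel_mix {M N : Matrix (Fin d) (Fin d) ℂ} (hM : M.PosSemidef) (hN : N.PosSemidef)
    (x : Fin d → ℂ) (hx : ((1/2 : ℝ) • M + (1/2 : ℝ) • N) *ᵥ x = 0) :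
    M *ᵥ x = 0 ∧ N *ᵥ x = 0 := by
  have hq : star x ⬝ᵥ (((1/2 : ℝ) • M + (1/2 : ℝ) • N) *ᵥ x) = 0 := by rw [hx]; simp
  rw [Matrix.add_mulVec, Matrix.smul_mulVec, Matrix.smul_mulVec,
    dotProduct_add, dotProduct_smul, dotProduct_smul] at hq
  have hqM := hM.dotProduct_mulVec_nonneg x
  have hqN := hN.dotProduct_mulVec_nonneg x
  set qM := star x ⬝ᵥ M *ᵥ x
  set qN := star x ⬝ᵥ N *ᵥ x
  have hreM : 0 ≤ qM.re ∧ qM.im = 0 := by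
    have := Complex.le_def.1 hqM
    exact ⟨by simpa using this.1, by simpa using this.2.symm⟩
  have hreN : 0 ≤ qN.re ∧ qN.im = 0 := by
    have := Complex.le_def.1 hqN
    exact ⟨by simpa using this.1, by simpa using this.2.symm⟩
  have hre : (1/2 : ℝ) * qM.re + (1/2 : ℝ) * qN.re = 0 := by
    have h' := congrArg Complex.re hq
    simp only [Complex.add_re, Complex.smul_re, Complex.zero_re, smul_eq_mul] at h'
    linarith [h']
  have hMre : qM.re = 0 := by linarith [hreM.1, hreN.1]
  have hNre : qN.re = 0 := by linarith [hreM.1, hreN.1]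
  constructor
  · exact (hM.dotProduct_mulVec_zero_iff x).1 (Complex.ext hMre hreM.2)
  · exact (hN.dotProduct_mulVec_zero_iff x).1 (Complex.ext hNre hreN.2)

lemma exists_kernel_vec {M : Matrix (Fin d) (Fin d) ℂ} (hM : M.PosSemidef)
    (h : ∀ ε : ℝ, 0 < ε → ¬ (M - (ε:ℂ) • (1 : Matrix (Fin d) (Fin d) ℂ)).PosSemidef) :
    ∃ x : Fin d → ℂ, x ≠ 0 ∧ M *ᵥ x = 0 := by
  have hH := hM.isHermitian
  by_cases hex : ∃ i, hH.eigenvalues i ≤ 0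
  · obtain ⟨i, hi⟩ := hex
    have h0 : hH.eigenvalues i = 0 := le_antisymm hi (hM.eigenvalues_nonneg i)
    refine ⟨⇑(hH.eigenvectorBasis i), ?_, ?_⟩
    · intro hc
      apply hH.eigenvectorBasis.orthonormal.ne_zero i
      ext k
      exact congrFun hc k
    · rw [hH.mulVec_eigenvectorBasis, h0]
      simp
  · push_neg at hex
    exfalso
    rcases Nat.eq_zero_or_pos d with hd | hd
    · apply h 1 one_pos
      have : (M - ((1:ℝ):ℂ) • 1 : Matrix (Fin d) (Fin d) ℂ) = 0 := by
        subst hd; ext i j; exact i.elim0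
      rw [this]
      exact Matrix.PosSemidef.zero
    · have hne : Nonempty (Fin d) := ⟨⟨0, hd⟩⟩
      set ε := Finset.univ.inf' (Finset.univ_nonempty) hH.eigenvalues with hε_def
      have hεpos : 0 < ε := by
        rw [hε_def, Finset.lt_inf'_iff]
        exact fun i _ => hex i
      apply h ε hεpos
      set U : Matrix (Fin d) (Fin d) ℂ := (hH.eigenvectorUnitary : Matrix (Fin d) (Fin d) ℂ)
        with hU_def
      have hUU : U * star U = 1 := Matrix.mem_unitaryGroup_iff.mp hH.eigenvectorUnitary.2
      have hsp := hH.spectral_theorem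
      rw [Unitary.conjStarAlgAut_apply, ← hU_def] at hsp
      have heq : M - (ε:ℂ) • 1
          = U * diagonal (fun i => ((hH.eigenvalues i - ε : ℝ) : ℂ)) * star U := by
        have h1 : ((ε:ℂ) • (1 : Matrix (Fin d) (Fin d) ℂ))
            = U * ((ε:ℂ) • (1 : Matrix (Fin d) (Fin d) ℂ)) * star U := by
          rw [Matrix.mul_smul, mul_one, Matrix.smul_mul, hUU]
        rw [MCAux.smul_one_eq_diagonal] at h1
        calc M - (ε:ℂ) • 1
            = U * diagonal (RCLike.ofReal ∘ hH.eigenvalues) * star U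
              - U * diagonal (fun _ => (ε:ℂ)) * star U := by
              rw [← hsp, ← h1, MCAux.smul_one_eq_diagonal]
          _ = U * (diagonal (RCLike.ofReal ∘ hH.eigenvalues) - diagonal (fun _ => (ε:ℂ)))
              * star U := by rw [Matrix.mul_sub, Matrix.sub_mul]
          _ = U * diagonal (fun i => ((hH.eigenvalues i - ε : ℝ) : ℂ)) * star U := by
              rw [Matrix.diagonal_sub]
              congr 1
              congr 1
              congr 1
              funext i
              push_cast
              simp [RCLike.ofReal]
      rw [heq, Matrix.star_eq_conjTranspose]
      apply Matrix.PosSemidef.mul_mul_conjTranspose_same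
      apply Matrix.PosSemidef.diagonal
      intro i
      show (0:ℂ) ≤ ((hH.eigenvalues i - ε : ℝ) : ℂ)
      rw [Complex.zero_le_real]
      have : ε ≤ hH.eigenvalues i := Finset.inf'_le _ (Finset.mem_univ i)
      linarith

end MCAux4

namespace MCAux5
open MCAux MCAux2 MCAux3 MCAux4
variable {d : ℕ}

lemma outer_mulVec (x y : Fin d → ℂ) :
    (Matrix.vecMulVec x (star x)) *ᵥ y = (star x ⬝ᵥ y) • x := by
  ext i
  simp only [Matrix.mulVec, dotProduct, Matrix.vecMulVec_apply, Pi.smul_apply,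
    smul_eq_mul, Finset.sum_mul, Pi.star_apply]
  exact Finset.sum_congr rfl fun j _ => by ring

lemma posSemidef_outer (x : Fin d → ℂ) (t : ℝ) (ht : 0 ≤ t) :
    ((t:ℂ) • Matrix.vecMulVec x (star x)).PosSemidef := by
  apply Matrix.PosSemidef.of_dotProduct_mulVec_nonneg
  · ext i j
    simp only [Matrix.conjTranspose_apply, Matrix.smul_apply, Matrix.vecMulVec_apply,
      Pi.star_apply, star_smul, star_mul']
    simp [Complex.star_def, Complex.conj_ofReal, mul_comm]
  · intro y
    have h1 : star y ⬝ᵥ x = star (star x ⬝ᵥ y) := Matrix.star_dotProduct _ _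
    rw [Matrix.smul_mulVec, dotProduct_smul, outer_mulVec,
      dotProduct_smul, h1, smul_eq_mul, smul_eq_mul]
    have h2 : (star x ⬝ᵥ y) * star (star x ⬝ᵥ y)
        = ((Complex.normSq (star x ⬝ᵥ y) : ℝ) : ℂ) := by
      rw [Complex.star_def, Complex.mul_conj]
    rw [h2, ← Complex.ofReal_mul, Complex.zero_le_real]
    exact mul_nonneg ht (Complex.normSq_nonneg _)

lemma trace_outer_mul (x : Fin d → ℂ) (M : Matrix (Fin d) (Fin d) ℂ) :
    ((Matrix.vecMulVec x (star x)) * M).trace = star x ⬝ᵥ (M *ᵥ x) := by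
  rw [Matrix.trace]
  simp only [Matrix.diag_apply, Matrix.mul_apply, Matrix.vecMulVec_apply, Pi.star_apply,
    dotProduct, Matrix.mulVec, dotProduct]
  rw [Finset.sum_comm]
  refine Finset.sum_congr rfl fun j _ => ?_
  rw [Finset.mul_sum]
  exact Finset.sum_congr rfl fun i _ => by ring

end MCAux5

namespace MCAux6
open MCAux MCAux2 MCAux3 MCAux4 MCAux5
variable {d : ℕ}

lemma exists_common_kernel {A : Set (Matrix (Fin d) (Fin d) ℂ)} (hne : A.Nonempty)
    (hpsd : ∀ M ∈ A, M.PosSemidef) (hconv : Convex ℝ A)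
    (hsing : ∀ M ∈ A, ∃ x : Fin d → ℂ, x ≠ 0 ∧ M *ᵥ x = 0) :
    ∃ x : Fin d → ℂ, x ≠ 0 ∧ ∀ M ∈ A, M *ᵥ x = 0 := by
  classical
  set P : ℕ → Prop := fun k =>
    ∃ M, M ∈ A ∧ Module.finrank ℂ ↥(LinearMap.ker M.mulVecLin) = k with hP_def
  have hP : ∃ k, P k := by
    obtain ⟨M, hM⟩ := hne
    exact ⟨_, M, hM, rfl⟩
  obtain ⟨M₀, hM₀A, hM₀rk⟩ := Nat.find_spec hP
  obtain ⟨x, hx0, hxker⟩ := hsing M₀ hM₀A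
  refine ⟨x, hx0, fun M hMA => ?_⟩
  set K : Matrix (Fin d) (Fin d) ℂ := (1/2 : ℝ) • M₀ + (1/2 : ℝ) • M with hK_def
  have hKA : K ∈ A := hconv hM₀A hMA (by norm_num) (by norm_num) (by norm_num)
  have hker : LinearMap.ker K.mulVecLin
      = LinearMap.ker M₀.mulVecLin ⊓ LinearMap.ker M.mulVecLin := by
    ext y
    simp only [LinearMap.mem_ker, Matrix.mulVecLin_apply, Submodule.mem_inf]
    constructor
    · intro hy
      exact kernel_mix (hpsd M₀ hM₀A) (hpsd M hMA) y hy
    · rintro ⟨h1, h2⟩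
      rw [hK_def, Matrix.add_mulVec, Matrix.smul_mulVec, Matrix.smul_mulVec,
        h1, h2]
      simp
  have hle : LinearMap.ker K.mulVecLin ≤ LinearMap.ker M₀.mulVecLin := by
    rw [hker]; exact inf_le_left
  have hge : (Nat.find hP) ≤ Module.finrank ℂ ↥(LinearMap.ker K.mulVecLin) :=
    Nat.find_le ⟨K, hKA, rfl⟩
  have heq : LinearMap.ker K.mulVecLin = LinearMap.ker M₀.mulVecLin := by
    apply Submodule.eq_of_le_of_finrank_le hle
    rw [hM₀rk]
    exact hge
  have hsub : LinearMap.ker M₀.mulVecLin ≤ LinearMap.ker M.mulVecLin := by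
    rw [← heq, hker]; exact inf_le_right
  have hxm : x ∈ LinearMap.ker M₀.mulVecLin := by
    simp only [LinearMap.mem_ker, Matrix.mulVecLin_apply]
    exact hxker
  have := hsub hxm
  simpa only [LinearMap.mem_ker, Matrix.mulVecLin_apply] using this

end MCAux6

namespace MCAux7
open MCAux MCAux2 MCAux3 MCAux4 MCAux5
variable {d : ℕ}

lemma herm_dot_im {H : Matrix (Fin d) (Fin d) ℂ} (hH : H.IsHermitian) (y : Fin d → ℂ) :
    (star y ⬝ᵥ H *ᵥ y).im = 0 := by
  have h1 : star y ⬝ᵥ H *ᵥ y = star (star (H *ᵥ y) ⬝ᵥ y) := Matrix.star_dotProduct _ _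
  have h2 : star (H *ᵥ y) ⬝ᵥ y = star y ⬝ᵥ H *ᵥ y := by
    rw [Matrix.star_mulVec, ← Matrix.dotProduct_mulVec, hH.eq]
  rw [h2] at h1
  have := congrArg Complex.im h1
  simp only [Complex.star_def, Complex.conj_im] at this
  linarith

lemma relint_of_smul_one (S : Set (Matrix (Fin d) (Fin d) ℂ)) (ε : ℝ) (hε : 0 < ε)
    (h : ∀ N : Matrix (Fin d) (Fin d) ℂ, N.PosSemidef →
      (((ε:ℝ):ℂ) • 1 - N).PosSemidef → N ∈ S) :
    mRelIntNonempty S := by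
  classical
  set c : ℝ := ε / 2 with hc_def
  set M₀ : Matrix (Fin d) (Fin d) ℂ := ((c:ℝ):ℂ) • 1 with hM₀_def
  have hdiff : ∀ N : Matrix (Fin d) (Fin d) ℂ,
      ((ε:ℂ) • 1 - N) = M₀ - (N - M₀) := by
    intro N
    rw [hM₀_def]
    have : ((ε:ℝ):ℂ) = ((c:ℝ):ℂ) + ((c:ℝ):ℂ) := by
      rw [hc_def]; push_cast; ring
    rw [this, add_smul]
    abel
  have hM₀psd : M₀.PosSemidef := posSemidef_smul_one (by positivity)
  have hM₀S : M₀ ∈ S := by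
    refine h M₀ hM₀psd ?_
    rw [hdiff, sub_self, sub_zero]
    exact hM₀psd
  refine ⟨M₀, hM₀S, ?_⟩
  rw [mem_nhdsWithin]
  set δ : ℝ := ε / (2 * (d + 1)) with hδ_def
  have hδpos : 0 < δ := by positivity
  refine ⟨{N | ∀ i j, ‖N i j - M₀ i j‖ < δ}, ?_, ?_, ?_⟩
  · have : {N : Matrix (Fin d) (Fin d) ℂ | ∀ i j, ‖N i j - M₀ i j‖ < δ}
        = ⋂ i, ⋂ j, {N : Matrix (Fin d) (Fin d) ℂ | ‖N i j - M₀ i j‖ < δ} := by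
      ext N; simp [Set.mem_iInter]
    rw [this]
    refine isOpen_iInter_of_finite fun i => isOpen_iInter_of_finite fun j => ?_
    have hcont : Continuous fun N : Matrix (Fin d) (Fin d) ℂ =>
        ‖N i j - M₀ i j‖ :=
      continuous_norm.comp ((continuous_id.matrix_elem i j).sub
        continuous_const)
    exact isOpen_lt hcont continuous_const
  · intro i j
    simp [hδpos]
  · rintro N ⟨hNU, hNpsd⟩
    refine h N hNpsd ?_
    rw [hdiff]
    apply Matrix.PosSemidef.of_dotProduct_mulVec_nonneg
    · exact (hM₀psd.isHermitian.sub (hNpsd.isHermitian.sub hM₀psd.isHermitian))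
    · intro y
      rw [Complex.le_def]
      constructor
      · simp only [Complex.zero_re]
        rw [Matrix.sub_mulVec, dotProduct_sub, Complex.sub_re]
        have hq1 : (star y ⬝ᵥ M₀ *ᵥ y) = ((c:ℝ):ℂ) * (star y ⬝ᵥ y) := by
          rw [hM₀_def, Matrix.smul_mulVec, Matrix.one_mulVec, dotProduct_smul,
            smul_eq_mul]
        have hyy : star y ⬝ᵥ y = ((∑ i, Complex.normSq (y i) : ℝ) : ℂ) := by
          rw [dotProduct]
          push_cast
          refine Finset.sum_congr rfl fun i _ => ?_
          rw [Pi.star_apply, Complex.star_def, mul_comm, Complex.mul_conj]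
        set Sy : ℝ := ∑ i, Complex.normSq (y i) with hSy_def
        have hq1re : (star y ⬝ᵥ M₀ *ᵥ y).re = c * Sy := by
          rw [hq1, hyy, ← Complex.ofReal_mul, Complex.ofReal_re]
        have habs : ‖star y ⬝ᵥ (N - M₀) *ᵥ y‖ ≤ δ * (∑ i, ‖y i‖)^2 := by
          rw [dotProduct]
          calc ‖∑ i, star y i * ((N - M₀) *ᵥ y) i‖
              ≤ ∑ i, ‖star y i * ((N - M₀) *ᵥ y) i‖ :=
                norm_sum_le _ _
            _ ≤ ∑ i, ‖y i‖ * (δ * ∑ j, ‖y j‖) := by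
                refine Finset.sum_le_sum fun i _ => ?_
                rw [norm_mul]
                have h1 : ‖star y i‖ = ‖y i‖ := by
                  rw [Pi.star_apply, Complex.star_def, Complex.norm_conj]
                rw [h1]
                refine mul_le_mul_of_nonneg_left ?_ (norm_nonneg _)
                rw [Matrix.mulVec, dotProduct]
                calc ‖∑ j, (N - M₀) i j * y j‖
                    ≤ ∑ j, ‖(N - M₀) i j * y j‖ := norm_sum_le _ _
                  _ ≤ ∑ j, δ * ‖y j‖ := by
                      refine Finset.sum_le_sum fun j _ => ?_
                      rw [norm_mul]
                      refine mul_le_mul_of_nonneg_right ?_ (norm_nonneg _)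
                      have := hNU i j
                      simpa [Matrix.sub_apply] using this.le
                  _ = δ * ∑ j, ‖y j‖ := by rw [Finset.mul_sum]
            _ = δ * (∑ i, ‖y i‖)^2 := by
                rw [← Finset.sum_mul]
                ring
        have hsum_sq : (∑ i, ‖y i‖)^2 ≤ (d : ℝ) * Sy := by
          have h1 : (∑ i, ‖y i‖)^2 ≤ (((Finset.univ : Finset (Fin d)).card : ℕ) : ℝ) *
              ∑ i, (‖y i‖)^2 := by
            exact_mod_cast sq_sum_le_card_mul_sum_sq
              (s := (Finset.univ : Finset (Fin d))) (f := fun i => ‖y i‖)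
          have h2 : ∀ i : Fin d, (‖y i‖)^2 = Complex.normSq (y i) :=
            fun i => Complex.sq_norm (y i)
          simp only [Finset.card_univ, Fintype.card_fin] at h1
          rw [hSy_def]
          calc (∑ i, ‖y i‖)^2 ≤ (d:ℝ) * ∑ i, (‖y i‖)^2 := h1
            _ = (d:ℝ) * ∑ i, Complex.normSq (y i) := by
                congr 1
                exact Finset.sum_congr rfl fun i _ => h2 i
        have hre2 : (star y ⬝ᵥ (N - M₀) *ᵥ y).re ≤ δ * ((d:ℝ) * Sy) := by
          calc (star y ⬝ᵥ (N - M₀) *ᵥ y).re ≤ ‖star y ⬝ᵥ (N - M₀) *ᵥ y‖ :=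
              Complex.re_le_norm _
            _ ≤ δ * (∑ i, ‖y i‖)^2 := habs
            _ ≤ δ * ((d:ℝ) * Sy) := mul_le_mul_of_nonneg_left hsum_sq hδpos.le
        have hSynn : 0 ≤ Sy := Finset.sum_nonneg fun i _ => Complex.normSq_nonneg _
        have hδd : δ * (d:ℝ) ≤ c := by
          rw [hδ_def, hc_def]
          rw [div_mul_eq_mul_div, div_le_div_iff₀ (by positivity) (by norm_num)]
          ring_nf
          nlinarith [hε.le, Nat.cast_nonneg (α := ℝ) d]
        rw [hq1re]
        nlinarith [hre2, hSynn, hδd, mul_le_mul_of_nonneg_right hδd hSynn]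
      · rw [Complex.zero_im]
        exact (herm_dot_im ((hM₀psd.isHermitian.sub
          (hNpsd.isHermitian.sub hM₀psd.isHermitian))) y).symm

lemma smul_one_mem_of_relint (S : Set (Matrix (Fin d) (Fin d) ℂ))
    (hpsd : ∀ M ∈ S, M.PosSemidef) (hher : mHered S) (hrel : mRelIntNonempty S) :
    ∃ ε : ℝ, 0 < ε ∧ ((ε:ℝ):ℂ) • (1 : Matrix (Fin d) (Fin d) ℂ) ∈ S := by
  obtain ⟨M₀, hM₀S, hnhd⟩ := hrel
  rw [mem_nhdsWithin] at hnhd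
  obtain ⟨U, hUopen, hM₀U, hUsub⟩ := hnhd
  have hcont : Continuous fun t : ℝ => M₀ + ((t:ℝ):ℂ) • (1 : Matrix (Fin d) (Fin d) ℂ) := by
    exact continuous_const.add ((Complex.continuous_ofReal).smul continuous_const)
  have hpre : (fun t : ℝ => M₀ + ((t:ℝ):ℂ) • (1 : Matrix (Fin d) (Fin d) ℂ)) ⁻¹' U ∈ nhds (0:ℝ) := by
    apply hcont.continuousAt.preimage_mem_nhds
    simpa using hUopen.mem_nhds hM₀U
  obtain ⟨r, hr, hball⟩ := Metric.mem_nhds_iff.1 hpre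
  set ε : ℝ := r / 2 with hε_def
  have hεpos : 0 < ε := by positivity
  have hmem : M₀ + ((ε:ℝ):ℂ) • 1 ∈ U := by
    apply hball
    rw [Metric.mem_ball, Real.dist_eq, sub_zero, abs_of_pos hεpos]
    rw [hε_def]; linarith
  have hpsd' : (M₀ + ((ε:ℝ):ℂ) • 1).PosSemidef :=
    (hpsd M₀ hM₀S).add (posSemidef_smul_one hεpos.le)
  have hS' : M₀ + ((ε:ℝ):ℂ) • 1 ∈ S := hUsub ⟨hmem, hpsd'⟩
  refine ⟨ε, hεpos, ?_⟩
  refine hher _ hS' _ (posSemidef_smul_one hεpos.le) ?_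
  simpa using hpsd M₀ hM₀S

end MCAux7

open MCAux MCAux2 MCAux3 MCAux4 MCAux5 MCAux6 MCAux7

/-- A convex corner in `M_d` has non-empty relative interior iff its
anti-blocker is bounded, and it is bounded iff its anti-blocker has non-empty relative
interior. -/
theorem mCorner_relInt_iff_sharp_bounded {d : ℕ} (A : Set (Matrix (Fin d) (Fin d) ℂ))
    (hA : mCorner A) :
    (mRelIntNonempty A ↔ mBounded (mSharp A)) ∧
    (mBounded A ↔ mRelIntNonempty (mSharp A)) := by
  obtain ⟨hne, hpsd, hclosed, hconv, hher⟩ := hA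
  have hsharp_psd : ∀ N ∈ mSharp A, N.PosSemidef := fun N hN => hN.1
  have hsharp_her : mHered (mSharp A) := by
    intro B hB M hM hBM
    refine ⟨hM, fun M' hM' => ?_⟩
    have hBe : B * M' = (B - M) * M' + M * M' := by rw [Matrix.sub_mul, sub_add_cancel]
    have h1 : ((B * M').trace).re = (((B - M) * M').trace).re + ((M * M').trace).re := by
      rw [hBe, Matrix.trace_add, Complex.add_re]
    have h2 : 0 ≤ (((B - M) * M').trace).re := trace_mul_re_nonneg hBM (hpsd M' hM')
    have h3 := hB.2 M' hM'
    linarith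
  have keyA : mRelIntNonempty A ↔ ∃ ε : ℝ, 0 < ε ∧ ((ε:ℝ):ℂ) • (1 : Matrix (Fin d) (Fin d) ℂ) ∈ A := by
    constructor
    · exact fun h => smul_one_mem_of_relint A hpsd hher h
    · rintro ⟨ε, hε, hmem⟩
      exact relint_of_smul_one A ε hε (fun N hN hsub => hher _ hmem N hN hsub)
  have keyS : mRelIntNonempty (mSharp A) ↔
      ∃ ε : ℝ, 0 < ε ∧ ((ε:ℝ):ℂ) • (1 : Matrix (Fin d) (Fin d) ℂ) ∈ mSharp A := by
    constructor
    · exact fun h => smul_one_mem_of_relint (mSharp A) hsharp_psd hsharp_her h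
    · rintro ⟨ε, hε, hmem⟩
      exact relint_of_smul_one (mSharp A) ε hε (fun N hN hsub => hsharp_her _ hmem N hN hsub)
  constructor
  · constructor
    · intro hrel
      obtain ⟨ε, hε, hmem⟩ := keyA.1 hrel
      refine ⟨1/ε, fun N hN i j => ?_⟩
      have h2 := hN.2 _ hmem
      have h3 : ((N * (((ε:ℝ):ℂ) • (1 : Matrix (Fin d) (Fin d) ℂ))).trace).re
          = ε * N.trace.re := by
        rw [Matrix.mul_smul, mul_one, Matrix.trace_smul, smul_eq_mul, Complex.re_ofReal_mul]
      rw [h3] at h2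
      have h4 : N.trace.re ≤ 1/ε := by rw [le_div_iff₀ hε, mul_comm]; exact h2
      exact le_trans (entry_abs_le_trace_re hN.1 i j) h4
    · intro hb
      by_contra hrel
      have hno : ∀ ε : ℝ, 0 < ε → ((ε:ℝ):ℂ) • (1 : Matrix (Fin d) (Fin d) ℂ) ∉ A :=
        fun ε hε hmem => hrel (keyA.2 ⟨ε, hε, hmem⟩)
      have hsing : ∀ M ∈ A, ∃ x : Fin d → ℂ, x ≠ 0 ∧ M *ᵥ x = 0 := by
        intro M hM
        apply exists_kernel_vec (hpsd M hM)
        intro ε hε hcon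
        exact hno ε hε (hher M hM _ (posSemidef_smul_one hε.le) hcon)
      obtain ⟨x, hx0, hxker⟩ := exists_common_kernel hne hpsd hconv hsing
      obtain ⟨i₀, hi₀'⟩ := Function.ne_iff.1 hx0
      have hi₀ : x i₀ ≠ 0 := by simpa using hi₀'
      obtain ⟨c, hc⟩ := hb
      have hnsq : 0 < Complex.normSq (x i₀) := by rwa [Complex.normSq_pos]
      set t : ℝ := (|c| + 1) / Complex.normSq (x i₀) with ht_def
      have htpos : 0 < t := by positivity
      have hNmem : ((t:ℝ):ℂ) • Matrix.vecMulVec x (star x) ∈ mSharp A := by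
        refine ⟨posSemidef_outer x t htpos.le, fun M hM => ?_⟩
        rw [Matrix.smul_mul, Matrix.trace_smul, trace_outer_mul, hxker M hM]
        simp
      have hle := hc _ hNmem i₀ i₀
      have hentry : (((t:ℝ):ℂ) • Matrix.vecMulVec x (star x)) i₀ i₀
          = ((|c| + 1 : ℝ) : ℂ) := by
        simp only [Matrix.smul_apply, Matrix.vecMulVec_apply, Pi.star_apply, smul_eq_mul]
        rw [Complex.star_def, Complex.mul_conj, ← Complex.ofReal_mul]
        congr 1
        rw [ht_def]
        field_simp
      rw [hentry, Complex.norm_real, Real.norm_eq_abs, abs_of_nonneg (by positivity)] at hle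
      have := le_abs_self c
      linarith
  · constructor
    · intro hb
      obtain ⟨c, hc⟩ := hb
      set c' : ℝ := max c 0 with hc'_def
      have hc'nn : 0 ≤ c' := le_max_right _ _
      have htr : ∀ M ∈ A, M.trace.re ≤ (d:ℝ) * c' := by
        intro M hM
        calc M.trace.re = ∑ k, (M k k).re := by rw [Matrix.trace]; exact Complex.re_sum _ _
          _ ≤ ∑ _k : Fin d, c' := Finset.sum_le_sum fun k _ =>
              le_trans (Complex.re_le_norm _) (le_trans (hc M hM k k) (le_max_left _ _))
          _ = (d:ℝ) * c' := by
              rw [Finset.sum_const, Finset.card_univ, Fintype.card_fin, nsmul_eq_mul]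
      set ε : ℝ := 1 / ((d:ℝ) * c' + 1) with hε_def
      have hεpos : 0 < ε := by positivity
      have hmem : ((ε:ℝ):ℂ) • (1 : Matrix (Fin d) (Fin d) ℂ) ∈ mSharp A := by
        refine ⟨posSemidef_smul_one hεpos.le, fun M hM => ?_⟩
        rw [trace_smul_one_mul]
        have h1 := htr M hM
        have h2 : ε * M.trace.re ≤ ε * ((d:ℝ) * c') := mul_le_mul_of_nonneg_left h1 hεpos.le
        have h3 : ε * ((d:ℝ) * c') ≤ 1 := by
          have heq : ε * ((d:ℝ) * c') = ((d:ℝ) * c') / ((d:ℝ) * c' + 1) := by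
            rw [hε_def]; ring
          rw [heq, div_le_one (by positivity)]
          linarith
        linarith
      exact keyS.2 ⟨ε, hεpos, hmem⟩
    · intro hrel
      obtain ⟨ε, hε, hmem⟩ := keyS.1 hrel
      refine ⟨1/ε, fun M hM i j => ?_⟩
      have h2 := hmem.2 M hM
      rw [trace_smul_one_mul] at h2
      have h4 : M.trace.re ≤ 1/ε := by rw [le_div_iff₀ hε, mul_comm]; exact h2
      exact le_trans (entry_abs_le_trace_re (hpsd M hM) i j) h4
end

section
/- If 𝒢 is a bounded non-empty subset of M_d^+, then the smallest convex corner containing 𝒢 equals the hereditary cover of the closed convex hull of 𝒢, i.e., C(𝒢) = her(conv-closure(𝒢)). -/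
open Matrix
open scoped ComplexOrder

lemma psd_smul' {d : ℕ} {t : ℝ} (ht : 0 ≤ t) {M : Matrix (Fin d) (Fin d) ℂ}
    (hM : M.PosSemidef) : (t • M).PosSemidef := by
  rw [posSemidef_iff_dotProduct_mulVec]
  constructor
  · show (t • M)ᴴ = t • M
    rw [conjTranspose_smul, star_trivial, hM.1.eq]
  · intro x
    rw [smul_mulVec, dotProduct_smul]
    have := hM.dotProduct_mulVec_nonneg x
    calc (0:ℂ) ≤ (t:ℂ) * (star x ⬝ᵥ (M *ᵥ x)) := mul_nonneg (by exact_mod_cast ht) this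
    _ = t • (star x ⬝ᵥ (M *ᵥ x)) := (Complex.real_smul ..).symm

lemma isClosed_psdSet {d : ℕ} : IsClosed {M : Matrix (Fin d) (Fin d) ℂ | M.PosSemidef} := by
  have : {M : Matrix (Fin d) (Fin d) ℂ | M.PosSemidef}
      = {M | Mᴴ = M} ∩ ⋂ x : Fin d → ℂ, {M | 0 ≤ star x ⬝ᵥ (M *ᵥ x)} := by
    ext M
    simp only [Set.mem_setOf_eq, Set.mem_inter_iff, Set.mem_iInter, Matrix.posSemidef_iff_dotProduct_mulVec,
      Matrix.IsHermitian]
  rw [this]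
  refine IsClosed.inter ?_ (isClosed_iInter fun x => ?_)
  · exact isClosed_eq (Continuous.matrix_conjTranspose continuous_id) continuous_id
  · have hc : Continuous fun M : Matrix (Fin d) (Fin d) ℂ => star x ⬝ᵥ (M *ᵥ x) :=
      (continuous_const).dotProduct ((continuous_id).matrix_mulVec continuous_const)
    have : IsClosed {z : ℂ | 0 ≤ z} := by
      have : {z : ℂ | 0 ≤ z} = Complex.re ⁻¹' Set.Ici 0 ∩ Complex.im ⁻¹' {0} := by
        ext z
        simp [Complex.le_def, eq_comm]
      rw [this]
      exact (isClosed_Ici.preimage Complex.continuous_re).inter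
        (isClosed_singleton.preimage Complex.continuous_im)
    exact this.preimage hc

lemma isCompact_entryBall {d : ℕ} (c : ℝ) :
    IsCompact {M : Matrix (Fin d) (Fin d) ℂ | ∀ i j, ‖M i j‖ ≤ c} := by
  have h1 : IsCompact (Set.pi Set.univ fun _ : Fin d =>
      Set.pi Set.univ fun _ : Fin d => Metric.closedBall (0:ℂ) c) :=
    isCompact_univ_pi fun _ => isCompact_univ_pi fun _ => isCompact_closedBall _ _
  have h2 : {M : Matrix (Fin d) (Fin d) ℂ | ∀ i j, ‖M i j‖ ≤ c}
      = (Set.pi Set.univ fun _ : Fin d =>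
          Set.pi Set.univ fun _ : Fin d => Metric.closedBall (0:ℂ) c) := by
    ext M
    constructor
    · intro h i _ j _
      simpa [Complex.dist_eq] using h i j
    · intro h i j
      simpa [Complex.dist_eq] using h i (Set.mem_univ i) j (Set.mem_univ j)
  rw [h2]
  exact h1

/-- For a bounded non-empty `G ⊆ M_d^+`, the smallest convex corner
containing `G` equals the hereditary cover of the closed convex hull of `G`. -/
theorem mCornerGenerated_eq_her_closure_convexHull {d : ℕ}
    (G : Set (Matrix (Fin d) (Fin d) ℂ)) (hne : G.Nonempty)
    (hpsd : ∀ M ∈ G, M.PosSemidef) (hbdd : mBounded G) :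
    ⋂₀ {A : Set (Matrix (Fin d) (Fin d) ℂ) | mCorner A ∧ G ⊆ A}
      = mHer (closure (convexHull ℝ G)) := by
  set K := closure (convexHull ℝ G) with hK
  have hGK : G ⊆ K := (subset_convexHull ℝ G).trans subset_closure
  have hPSDconv : Convex ℝ {M : Matrix (Fin d) (Fin d) ℂ | M.PosSemidef} := by
    intro M hM N hN a b ha hb hab
    exact (psd_smul' ha hM).add (psd_smul' hb hN)
  have hKpsd : ∀ M ∈ K, M.PosSemidef :=
    closure_minimal (convexHull_min hpsd hPSDconv) isClosed_psdSet
  have hKconv : Convex ℝ K := (convex_convexHull ℝ G).closure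
  -- compactness of K
  obtain ⟨c, hc⟩ := hbdd
  have hKcompact : IsCompact K := by
    refine (isCompact_entryBall (d := d) c).of_isClosed_subset isClosed_closure ?_
    refine closure_minimal (convexHull_min hc ?_) ?_
    · intro M hM N hN a b ha hb hab i j
      have : (a • M + b • N) i j = (a : ℂ) * M i j + (b : ℂ) * N i j := by
        simp [Complex.real_smul]
      rw [this]
      calc ‖(a:ℂ) * M i j + (b:ℂ) * N i j‖
          ≤ ‖(a:ℂ) * M i j‖ + ‖(b:ℂ) * N i j‖ :=
            norm_add_le _ _
        _ = a * ‖M i j‖ + b * ‖N i j‖ := by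
            simp [abs_of_nonneg ha, abs_of_nonneg hb]
        _ ≤ a * c + b * c := by
            gcongr
            · exact hM i j
            · exact hN i j
        _ = c := by rw [← add_mul, hab, one_mul]
    · have : {M : Matrix (Fin d) (Fin d) ℂ | ∀ i j, ‖M i j‖ ≤ c}
          = ⋂ i, ⋂ j, {M : Matrix (Fin d) (Fin d) ℂ | ‖M i j‖ ≤ c} := by
        ext M; simp
      rw [this]
      refine isClosed_iInter fun i => isClosed_iInter fun j => ?_
      have hcont : Continuous fun M : Matrix (Fin d) (Fin d) ℂ => ‖M i j‖ :=
        continuous_norm.comp ((continuous_apply j).comp (continuous_apply i))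
      exact isClosed_le hcont continuous_const
  -- mHer K is closed
  have hHerClosed : IsClosed (mHer K) := by
    haveI : FirstCountableTopology (Matrix (Fin d) (Fin d) ℂ) :=
      inferInstanceAs (FirstCountableTopology ((Fin d) → (Fin d) → ℂ))
    refine IsSeqClosed.isClosed ?_
    intro x L hx hL
    choose N hNK hNx using fun n => (hx n).2
    obtain ⟨N', hN'K, φ, hφ, hNφ⟩ := hKcompact.tendsto_subseq hNK
    refine ⟨?_, N', hN'K, ?_⟩
    · exact isClosed_psdSet.mem_of_tendsto hL (Filter.Eventually.of_forall fun n => (hx n).1)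
    · have ht : Filter.Tendsto (fun n => N (φ n) - x (φ n)) Filter.atTop (nhds (N' - L)) :=
        hNφ.sub (hL.comp hφ.tendsto_atTop)
      exact isClosed_psdSet.mem_of_tendsto ht (Filter.Eventually.of_forall fun n => hNx (φ n))
  -- G ⊆ mHer K
  have hGH : G ⊆ mHer K := by
    intro M hM
    exact ⟨hpsd M hM, M, hGK hM, by simpa using Matrix.PosSemidef.zero⟩
  -- mHer K is a corner
  have hCorner : mCorner (mHer K) := by
    refine ⟨hne.mono hGH, fun M hM => hM.1, hHerClosed, ?_, ?_⟩
    · rintro M₁ ⟨h₁, N₁, hN₁, hd₁⟩ M₂ ⟨h₂, N₂, hN₂, hd₂⟩ a b ha hb hab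
      refine ⟨hPSDconv h₁ h₂ ha hb hab, a • N₁ + b • N₂, hKconv hN₁ hN₂ ha hb hab, ?_⟩
      have : a • N₁ + b • N₂ - (a • M₁ + b • M₂) = a • (N₁ - M₁) + b • (N₂ - M₂) := by
        simp only [smul_sub]; abel
      rw [this]
      exact (psd_smul' ha hd₁).add (psd_smul' hb hd₂)
    · rintro B ⟨hBpsd, N, hNK, hNB⟩ M hMpsd hBM
      refine ⟨hMpsd, N, hNK, ?_⟩
      have : N - M = (N - B) + (B - M) := by abel
      rw [this]
      exact hNB.add hBM
  apply Set.Subset.antisymm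
  · exact Set.sInter_subset_of_mem ⟨hCorner, hGH⟩
  · refine Set.subset_sInter ?_
    rintro A ⟨⟨-, -, hAclosed, hAconv, hAhered⟩, hGA⟩
    rintro M ⟨hMpsd, N, hNK, hNM⟩
    have hKA : K ⊆ A := closure_minimal (convexHull_min hGA hAconv) hAclosed
    exact hAhered N (hKA hNK) M hMpsd hNM
end

section
/- For C ∈ M_d^+, the set ℬ_C = {M ∈ M_d^+ : M ≤ C} is a reflexive convex corner whose anti-blocker is 𝒜_C = {M ∈ M_d^+ : Tr(MC) ≤ 1}; that is, ℬ_C^♯ = 𝒜_C and ℬ_C^♯♯ = ℬ_C. -/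
open Matrix
open scoped ComplexOrder

lemma myTrace_re_nonneg {d : ℕ} {M : Matrix (Fin d) (Fin d) ℂ} (hM : M.PosSemidef) :
    0 ≤ M.trace.re := by
  rw [Matrix.trace, Complex.re_sum]
  refine Finset.sum_nonneg fun i _ => ?_
  have h := hM.dotProduct_mulVec_nonneg (Pi.single i 1)
  rw [Complex.le_def] at h
  simpa [Matrix.mulVec_single, dotProduct, Pi.single_apply, Matrix.diag] using h.1

open scoped MatrixOrder in
lemma myTrace_mul_re_nonneg {d : ℕ} {A B : Matrix (Fin d) (Fin d) ℂ}
    (hA : A.PosSemidef) (hB : B.PosSemidef) : 0 ≤ ((A * B).trace).re := by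
  have h2 : (A * B).trace = ((CFC.sqrt B)ᴴ * A * CFC.sqrt B).trace := by
    conv_lhs => rw [← CFC.sqrt_mul_sqrt_self B hB.nonneg]
    rw [(CFC.sqrt_nonneg B).posSemidef.1.eq, ← mul_assoc, Matrix.trace_mul_comm, ← mul_assoc]
  rw [h2]
  exact myTrace_re_nonneg (hA.conjTranspose_mul_mul_same (CFC.sqrt B))

lemma myRankOne_trace {d : ℕ} (x : Fin d → ℂ) (M : Matrix (Fin d) (Fin d) ℂ) :
    ((Matrix.vecMulVec x (star x)) * M).trace = star x ⬝ᵥ (M *ᵥ x) := by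
  simp only [Matrix.trace, Matrix.diag, Matrix.mul_apply, Matrix.vecMulVec_apply,
    dotProduct, Matrix.mulVec, Pi.star_apply, Finset.mul_sum]
  rw [Finset.sum_comm]
  exact Finset.sum_congr rfl fun j _ => Finset.sum_congr rfl fun i _ => by ring

lemma myRankOne_psd {d : ℕ} (x : Fin d → ℂ) : (Matrix.vecMulVec x (star x)).PosSemidef := by
  rw [Matrix.vecMulVec_eq (Fin 1), ← Matrix.conjTranspose_replicateCol]
  exact Matrix.posSemidef_self_mul_conjTranspose _

lemma myPSD_smul {d : ℕ} {M : Matrix (Fin d) (Fin d) ℂ} (hM : M.PosSemidef) {r : ℝ} (hr : 0 ≤ r) :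
    ((r : ℂ) • M).PosSemidef := by
  refine Matrix.PosSemidef.of_dotProduct_mulVec_nonneg ?_ ?_
  · unfold Matrix.IsHermitian
    rw [Matrix.conjTranspose_smul, hM.1.eq]
    simp
  · intro y
    rw [Matrix.smul_mulVec, dotProduct_smul]
    exact smul_nonneg (by exact_mod_cast hr) (hM.dotProduct_mulVec_nonneg y)


/-- For `C ∈ M_d^+`, `B_C = {M ∈ M_d^+ : M ≤ C}` satisfies
`B_C^♯ = A_C = {M ∈ M_d^+ : Tr(MC) ≤ 1}` and `B_C^♯♯ = B_C`. -/
theorem mSharp_BC_eq_AC {d : ℕ} (C : Matrix (Fin d) (Fin d) ℂ) (hC : C.PosSemidef) :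
    mSharp {M : Matrix (Fin d) (Fin d) ℂ | M.PosSemidef ∧ (C - M).PosSemidef}
      = {M : Matrix (Fin d) (Fin d) ℂ | M.PosSemidef ∧ ((M * C).trace).re ≤ 1} ∧
    mSharp (mSharp {M : Matrix (Fin d) (Fin d) ℂ | M.PosSemidef ∧ (C - M).PosSemidef})
      = {M : Matrix (Fin d) (Fin d) ℂ | M.PosSemidef ∧ (C - M).PosSemidef} := by
  have hCB : C ∈ {M : Matrix (Fin d) (Fin d) ℂ | M.PosSemidef ∧ (C - M).PosSemidef} :=
    ⟨hC, by simpa using (Matrix.PosSemidef.zero : (0 : Matrix (Fin d) (Fin d) ℂ).PosSemidef)⟩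
  have h1 : mSharp {M : Matrix (Fin d) (Fin d) ℂ | M.PosSemidef ∧ (C - M).PosSemidef}
      = {M : Matrix (Fin d) (Fin d) ℂ | M.PosSemidef ∧ ((M * C).trace).re ≤ 1} := by
    ext N
    constructor
    · rintro ⟨hN, h⟩
      exact ⟨hN, h C hCB⟩
    · rintro ⟨hN, hle⟩
      refine ⟨hN, fun M hM => ?_⟩
      have key : ((N * M).trace).re + ((N * (C - M)).trace).re = ((N * C).trace).re := by
        rw [mul_sub, Matrix.trace_sub, Complex.sub_re]
        ring
      have h0 := myTrace_mul_re_nonneg hN hM.2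
      linarith
  refine ⟨h1, ?_⟩
  rw [h1]
  ext N
  constructor
  · rintro ⟨hN, h⟩
    refine ⟨hN, Matrix.PosSemidef.of_dotProduct_mulVec_nonneg (hC.1.sub hN.1) fun x => ?_⟩
    have hc := hC.dotProduct_mulVec_nonneg x
    have hn := hN.dotProduct_mulVec_nonneg x
    have hre : (star x ⬝ᵥ N *ᵥ x).re ≤ (star x ⬝ᵥ C *ᵥ x).re := by
      by_contra hlt
      push_neg at hlt
      set cr := (star x ⬝ᵥ C *ᵥ x).re with hcr
      set nr := (star x ⬝ᵥ N *ᵥ x).re with hnr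
      have hc0 : 0 ≤ cr := (Complex.le_def.mp hc).1
      have hn0 : 0 ≤ nr := (Complex.le_def.mp hn).1
      have hs : 0 < nr + cr := by linarith
      set t : ℝ := 2 / (nr + cr) with ht
      have ht0 : 0 ≤ t := le_of_lt (div_pos two_pos hs)
      set P := (t : ℂ) • Matrix.vecMulVec x (star x) with hP
      have hPtr : ∀ M : Matrix (Fin d) (Fin d) ℂ,
          ((P * M).trace).re = t * (star x ⬝ᵥ M *ᵥ x).re := by
        intro M
        rw [hP, smul_mul_assoc, Matrix.trace_smul, myRankOne_trace]
        exact Complex.re_ofReal_mul t _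
      have hPA : P ∈ {M : Matrix (Fin d) (Fin d) ℂ | M.PosSemidef ∧ ((M * C).trace).re ≤ 1} := by
        refine ⟨myPSD_smul (myRankOne_psd x) ht0, ?_⟩
        rw [hPtr C, ht, div_mul_eq_mul_div, div_le_one hs]
        linarith
      have hcontra := h P hPA
      rw [Matrix.trace_mul_comm, hPtr N, ht, div_mul_eq_mul_div, div_le_one hs] at hcontra
      linarith
    have himc := (Complex.le_def.mp hc).2
    have himn := (Complex.le_def.mp hn).2
    rw [Matrix.sub_mulVec, dotProduct_sub, Complex.le_def, Complex.sub_re,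
      Complex.sub_im]
    constructor
    · simpa using hre
    · simp [← himc, ← himn]
  · rintro ⟨hN, hsub⟩
    refine ⟨hN, fun P hP => ?_⟩
    rw [Matrix.trace_mul_comm]
    have key : ((P * N).trace).re + ((P * (C - N)).trace).re = ((P * C).trace).re := by
      rw [mul_sub, Matrix.trace_sub, Complex.sub_re]
      ring
    have h0 := myTrace_mul_re_nonneg hP.1 hsub
    linarith [hP.2]
end

section
/- For a standard convex corner 𝒜 in M_d, the maximum over all density matrices ρ of the entropy H_𝒜(ρ) = min_{A∈𝒜} −Tr(ρ log A) equals −log N(𝒜), where N(𝒜) = max{β : βI ∈ 𝒜}. -/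
open Matrix
open scoped ComplexOrder

/- `-Tr(ρ log A)`, defined via the spectral decomposition of `A`, with value `⊤`
(i.e. `Tr(ρ log A) = -∞`) when `ker A ⊄ ker ρ`.  With the convention `log 0 = 0`
the vanishing eigenvalues contribute nothing since the kernel condition forces the
corresponding coefficients `⟨ρuᵢ, uᵢ⟩` to vanish. -/
open scoped Classical in
noncomputable def negTrLog {d : ℕ} (ρ A : Matrix (Fin d) (Fin d) ℂ) : EReal :=
  if h : A.IsHermitian ∧ ∀ v : Fin d → ℂ, A.mulVec v = 0 → ρ.mulVec v = 0 then
    ((-(∑ i, ((star (h.1.eigenvectorUnitary : Matrix (Fin d) (Fin d) ℂ) * ρ *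
        (h.1.eigenvectorUnitary : Matrix (Fin d) (Fin d) ℂ)) i i).re *
        Real.log (h.1.eigenvalues i)) : ℝ) : EReal)
  else ⊤

section AuxCorner

variable {d : ℕ}

abbrev Mat (d : ℕ) := Matrix (Fin d) (Fin d) ℂ

instance : LocallyConvexSpace ℝ (Mat d) :=
  show LocallyConvexSpace ℝ (Fin d → Fin d → ℂ) from inferInstance

open Pointwise




lemma auxEntryQuad (M U : Mat d) (i : Fin d) :
    (star U * M * U) i i = star (fun k => U k i) ⬝ᵥ (M *ᵥ fun k => U k i) := by
  simp only [Matrix.mul_apply, Matrix.star_eq_conjTranspose, conjTranspose_apply,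
    dotProduct, mulVec, Pi.star_apply, Finset.sum_mul, Finset.mul_sum]
  rw [Finset.sum_comm]
  exact Finset.sum_congr rfl fun k _ => Finset.sum_congr rfl fun l _ => by ring

lemma auxDiagNonneg {M : Mat d} (hM : M.PosSemidef) (i : Fin d) : 0 ≤ M i i := by
  have := hM.dotProduct_mulVec_nonneg (Pi.single i 1)
  simpa [dotProduct, mulVec, Pi.single_apply, Finset.mul_sum] using this

lemma auxTraceConj {ρ : Mat d} (U : Matrix.unitaryGroup (Fin d) ℂ) :
    ((star (U : Mat d) * ρ * (U : Mat d)).trace) = ρ.trace := by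
  rw [trace_mul_cycle, Matrix.mem_unitaryGroup_iff.mp U.2, Matrix.one_mul]

lemma auxSumDiagRe {ρ : Mat d} (h1 : ρ.trace = 1) (U : Matrix.unitaryGroup (Fin d) ℂ) :
    ∑ i, ((star (U : Mat d) * ρ * (U : Mat d)) i i).re = 1 := by
  have h2 : ((star (U : Mat d) * ρ * (U : Mat d)).trace) = 1 := by rw [auxTraceConj U, h1]
  calc ∑ i, ((star (U : Mat d) * ρ * (U : Mat d)) i i).re
      = ((star (U : Mat d) * ρ * (U : Mat d)).trace).re := by
        rw [Matrix.trace]; rw [Complex.re_sum]; rfl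
    _ = 1 := by rw [h2]; rfl

lemma auxPsdSmul {r : ℝ} (hr : 0 ≤ r) {M : Mat d} (hM : M.PosSemidef) : (r • M).PosSemidef := by
  rw [posSemidef_iff_dotProduct_mulVec]
  constructor
  · show (r • M)ᴴ = r • M
    rw [conjTranspose_smul, hM.1.eq, star_trivial]
  · intro x
    rw [smul_mulVec, dotProduct_smul]
    rw [Complex.real_smul]
    exact mul_nonneg (by exact_mod_cast Complex.zero_le_real.mpr hr) (hM.dotProduct_mulVec_nonneg x)



lemma auxNonnegClosed : IsClosed {z : ℂ | 0 ≤ z} := by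
  have : {z : ℂ | 0 ≤ z} = Complex.re ⁻¹' (Set.Ici 0) ∩ Complex.im ⁻¹' {0} := by
    ext z
    simp [Complex.le_def, eq_comm]
  rw [this]
  exact (isClosed_Ici.preimage Complex.continuous_re).inter
    (isClosed_singleton.preimage Complex.continuous_im)

lemma auxPsdClosed : IsClosed {M : Mat d | M.PosSemidef} := by
  have : {M : Mat d | M.PosSemidef}
      = {M : Mat d | Mᴴ = M} ∩ ⋂ v : Fin d → ℂ, {M : Mat d | 0 ≤ star v ⬝ᵥ M *ᵥ v} := by
    ext M
    simp only [Set.mem_setOf_eq, Set.mem_inter_iff, Set.mem_iInter]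
    exact posSemidef_iff_dotProduct_mulVec
  rw [this]
  refine (isClosed_eq (continuous_id.matrix_conjTranspose) continuous_id).inter
    (isClosed_iInter fun v => ?_)
  have hc : Continuous fun M : Mat d => star v ⬝ᵥ M *ᵥ v :=
    continuous_const.dotProduct (continuous_id.matrix_mulVec continuous_const)
  exact auxNonnegClosed.preimage hc

lemma auxCompactOfBounded {s : Set (Mat d)} (hs : IsClosed s)
    (hb : ∃ c, ∀ M ∈ s, ∀ i j, ‖M i j‖ ≤ c) : IsCompact s := by
  obtain ⟨c, hc⟩ := hb
  have hK : IsCompact (Set.univ.pi fun _ : Fin d =>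
      (Set.univ.pi fun _ : Fin d => Metric.closedBall (0 : ℂ) c) : Set (Mat d)) :=
    isCompact_univ_pi fun _ => isCompact_univ_pi fun _ => isCompact_closedBall _ _
  refine hK.of_isClosed_subset hs fun M hM => ?_
  intro i _
  intro j _
  simpa [Complex.dist_eq] using hc M hM i j

lemma auxEntryBound {ρ : Mat d} (hρ : ρ.PosSemidef) (h1 : ρ.trace = 1) (i j : Fin d) :
    ‖ρ i j‖ ≤ 1 := by
  obtain ⟨B, hB⟩ : ∃ B : Mat d, ρ = Bᴴ * B := by
    open scoped MatrixOrder in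
    exact CStarAlgebra.nonneg_iff_eq_star_mul_self.mp hρ.nonneg
  subst hB
  set g : Fin d → ℝ := fun i => ∑ k, Complex.normSq (B k i) with hg
  have hgnn : ∀ i, 0 ≤ g i := fun i =>
    Finset.sum_nonneg fun k _ => Complex.normSq_nonneg _
  have hgsum : ∑ i, g i = 1 := by
    have : ((Bᴴ * B).trace) = ((∑ i, g i : ℝ) : ℂ) := by
      simp only [Matrix.trace, Matrix.diag, Matrix.mul_apply, conjTranspose_apply, hg,
        Complex.ofReal_sum]
      refine Finset.sum_congr rfl fun i _ => Finset.sum_congr rfl fun k _ => ?_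
      rw [Complex.normSq_eq_conj_mul_self]
      rfl
    rw [h1] at this
    exact_mod_cast this.symm
  have hgle : ∀ i, g i ≤ 1 := by
    intro i
    rw [← hgsum]
    exact Finset.single_le_sum (fun k _ => hgnn k) (Finset.mem_univ i)
  have habs : ‖(Bᴴ * B) i j‖ ≤ ∑ k, ‖B k i‖ * ‖B k j‖ := by
    rw [Matrix.mul_apply]
    refine le_trans (norm_sum_le _ _) (le_of_eq ?_)
    exact Finset.sum_congr rfl fun k _ => by
      simp only [conjTranspose_apply, norm_mul, RCLike.star_def, Complex.norm_conj]
  have hcs : (∑ k, ‖B k i‖ * ‖B k j‖) ^ 2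
      ≤ (∑ k, ‖B k i‖ ^ 2) * (∑ k, ‖B k j‖ ^ 2) :=
    Finset.sum_mul_sq_le_sq_mul_sq Finset.univ _ _
  have hsq : ∀ i, (∑ k, ‖B k i‖ ^ 2) = g i := by
    intro i
    exact Finset.sum_congr rfl fun k _ => Complex.sq_norm _
  rw [hsq, hsq] at hcs
  have hnn : 0 ≤ ∑ k, ‖B k i‖ * ‖B k j‖ :=
    Finset.sum_nonneg fun k _ => mul_nonneg (norm_nonneg _) (norm_nonneg _)
  nlinarith [hgle i, hgle j, hgnn i, hgnn j, habs, norm_nonneg ((Bᴴ * B) i j)]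




lemma auxTraceConj' {ρ : Mat d} (U : Matrix.unitaryGroup (Fin d) ℂ) :
    ((star (U : Mat d) * ρ * (U : Mat d)).trace) = ρ.trace := by
  rw [trace_mul_cycle, Matrix.mem_unitaryGroup_iff.mp U.2, Matrix.one_mul]

lemma auxSumDiagRe' {ρ : Mat d} (h1 : ρ.trace = 1) (U : Matrix.unitaryGroup (Fin d) ℂ) :
    ∑ i, ((star (U : Mat d) * ρ * (U : Mat d)) i i).re = 1 := by
  have h2 : ((star (U : Mat d) * ρ * (U : Mat d)).trace) = 1 := by rw [auxTraceConj' U, h1]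
  calc ∑ i, ((star (U : Mat d) * ρ * (U : Mat d)) i i).re
      = ((star (U : Mat d) * ρ * (U : Mat d)).trace).re := by
        rw [Matrix.trace, Complex.re_sum]; rfl
    _ = 1 := by rw [h2]; rfl

lemma auxHermSmulOne (r : ℝ) : (r • (1 : Mat d)).IsHermitian := by
  show (r • (1 : Mat d))ᴴ = r • (1 : Mat d)
  rw [conjTranspose_smul, star_trivial, conjTranspose_one]

lemma auxNegTrLogScalar {ρ : Mat d} (h1 : ρ.trace = 1) {N : ℝ} (hN : 0 < N) :
    negTrLog ρ (N • (1 : Mat d)) = ((-Real.log N : ℝ) : EReal) := by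
  have hherm : (N • (1 : Mat d)).IsHermitian := auxHermSmulOne N
  have hker : ∀ v : Fin d → ℂ, (N • (1 : Mat d)) *ᵥ v = 0 → ρ *ᵥ v = 0 := by
    intro v hv
    have h2 : (N • (1 : Mat d)) *ᵥ v = N • v := by
      rw [smul_mulVec, one_mulVec]
    rw [h2] at hv
    have hv0 : v = 0 := by
      rcases smul_eq_zero.mp hv with h | h
      · exact absurd h hN.ne'
      · exact h
    rw [hv0, mulVec_zero]
  rw [negTrLog, dif_pos ⟨hherm, hker⟩]
  have heig : ∀ i, hherm.eigenvalues i = N := by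
    intro i
    have hdiag := hherm.conjStarAlgAut_star_eigenvectorUnitary
    simp only [Unitary.conjStarAlgAut_apply, Unitary.coe_star, star_star] at hdiag
    have hl : star (hherm.eigenvectorUnitary : Mat d) * (N • (1 : Mat d)) *
        (hherm.eigenvectorUnitary : Mat d) = N • (1 : Mat d) := by
      rw [mul_smul_comm, mul_one, smul_mul_assoc, Matrix.mem_unitaryGroup_iff'.mp
        (hherm.eigenvectorUnitary).2]
    rw [hl] at hdiag
    have h3 := congr_fun (congr_fun hdiag i) i
    simp only [Matrix.smul_apply, Matrix.one_apply_eq, Matrix.diagonal_apply_eq,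
      Function.comp_apply, RCLike.ofReal_alg] at h3
    have h4 : (N : ℂ) = (hherm.eigenvalues i : ℂ) := by
      simpa [Complex.real_smul] using h3
    exact_mod_cast h4.symm
  congr 1
  simp only [heig]
  rw [← Finset.sum_mul, auxSumDiagRe' h1, one_mul]







lemma auxJensen {ρ B : Mat d} (hρ : ρ.PosSemidef) (hρ1 : ρ.trace = 1) (hB : B.PosSemidef)
    {N : ℝ} (hN : 0 < N) (hle : ((ρ * B).trace).re ≤ N) :
    ((-Real.log N : ℝ) : EReal) ≤ negTrLog ρ B := by
  rw [negTrLog]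
  split_ifs with h
  · rw [EReal.coe_le_coe_iff]
    set U : Mat d := (h.1.eigenvectorUnitary : Mat d) with hU
    set p : Fin d → ℝ := fun i => ((star U * ρ * U) i i).re with hp
    set lam : Fin d → ℝ := h.1.eigenvalues with hlam
    have hpsum : ∑ i, p i = 1 := auxSumDiagRe hρ1 h.1.eigenvectorUnitary
    have hppsd : (star U * ρ * U).PosSemidef := by
      rw [Matrix.star_eq_conjTranspose]
      exact hρ.conjTranspose_mul_mul_same U
    have hp0 : ∀ i, 0 ≤ p i := fun i => (Complex.le_def.mp (auxDiagNonneg hppsd i)).1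
    have hlam0 : ∀ i, 0 ≤ lam i := fun i => hB.eigenvalues_nonneg i
    have hzero : ∀ i, lam i = 0 → p i = 0 := by
      intro i h0
      have hv : B *ᵥ ⇑(h.1.eigenvectorBasis i) = 0 := by
        rw [h.1.mulVec_eigenvectorBasis, ← hlam, h0, zero_smul]
      have hρv := h.2 _ hv
      have hq : (star U * ρ * U) i i
          = star (fun k => U k i) ⬝ᵥ (ρ *ᵥ fun k => U k i) := auxEntryQuad ρ U i
      have hcol : (fun k => U k i) = ⇑(h.1.eigenvectorBasis i) :=
        funext fun k => h.1.eigenvectorUnitary_apply k i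
      rw [hp]
      simp only [hq, hcol, hρv, dotProduct_zero, Complex.zero_re]
    have hsum2 : ∑ i, p i * lam i = ((ρ * B).trace).re := by
      have hspec : ρ * B = (ρ * U * diagonal (RCLike.ofReal ∘ lam)) * star U := by
        conv_lhs => rw [h.1.spectral_theorem, Unitary.conjStarAlgAut_apply]
        rw [← hU, ← hlam]
        noncomm_ring
      rw [hspec, trace_mul_comm, ← Matrix.mul_assoc, ← Matrix.mul_assoc]
      rw [Matrix.trace]
      rw [Complex.re_sum]
      refine (Finset.sum_congr rfl fun i _ => ?_).symm
      rw [Matrix.diag_apply, Matrix.mul_diagonal]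
      simp [hp, Complex.mul_re, Complex.ofReal_re, Complex.ofReal_im, RCLike.ofReal_alg,
        Complex.real_smul]
    have key : ∑ i, p i * Real.log (lam i) ≤ Real.log N := by
      have step : ∀ i ∈ Finset.univ, p i * Real.log (lam i)
          ≤ p i * Real.log N + p i * (lam i / N - 1) := by
        intro i _
        rcases eq_or_lt_of_le (hlam0 i) with h0 | hpos
        · rw [hzero i h0.symm]; simp
        · have hlog : Real.log (lam i) ≤ Real.log N + (lam i / N - 1) := by
            have h5 := Real.log_le_sub_one_of_pos (div_pos hpos hN)
            rw [Real.log_div hpos.ne' hN.ne'] at h5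
            linarith
          nlinarith [hp0 i]
      calc ∑ i, p i * Real.log (lam i)
          ≤ ∑ i, (p i * Real.log N + p i * (lam i / N - 1)) := Finset.sum_le_sum step
        _ = (∑ i, p i) * Real.log N + ((∑ i, p i * lam i) / N - (∑ i, p i)) := by
            rw [Finset.sum_add_distrib, ← Finset.sum_mul]
            congr 1
            rw [Finset.sum_div, ← Finset.sum_sub_distrib]
            exact Finset.sum_congr rfl fun i _ => by ring
        _ ≤ Real.log N := by
            rw [hpsum, hsum2, one_mul]
            have : ((ρ * B).trace).re / N ≤ 1 := (div_le_one hN).mpr hle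
            linarith
    linarith
  · exact le_top



lemma auxStdDecomp (i j : Fin d) (z : ℂ) :
    single i j z
      = z.re • single i j (1 : ℂ) + z.im • single i j Complex.I := by
  rw [smul_single, smul_single, ← single_add]
  rw [Complex.real_smul, Complex.real_smul, mul_one, Complex.re_add_im]

lemma auxRepr (f : Mat d →L[ℝ] ℝ) :
    ∃ X : Mat d, ∀ M : Mat d, f M = ((X * M).trace).re := by
  set w : Fin d → Fin d → ℂ := fun i j =>
    (⟨f (single i j 1), -(f (single i j Complex.I))⟩ : ℂ) with hw
  refine ⟨Matrix.of (fun i k => w k i), fun M => ?_⟩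
  have hstd : ∀ (i j : Fin d) (z : ℂ), f (single i j z) = (w i j * z).re := by
    intro i j z
    rw [auxStdDecomp i j z, map_add, _root_.map_smul, _root_.map_smul]
    simp only [hw, Complex.mul_re, smul_eq_mul]
    ring
  have htr : (((Matrix.of (fun i k => w k i) : Mat d) * M).trace).re
      = ∑ i, ∑ j, (w i j * M i j).re := by
    simp only [Matrix.trace, Matrix.diag_apply, Complex.re_sum, Matrix.mul_apply,
      Matrix.of_apply]
    exact Finset.sum_comm
  rw [htr]
  calc f M = f (∑ i, ∑ j, single i j (M i j)) := by
        rw [← matrix_eq_sum_single M]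
    _ = ∑ i, ∑ j, (w i j * M i j).re := by
        rw [map_sum]
        exact Finset.sum_congr rfl fun i _ => by
          rw [map_sum]
          exact Finset.sum_congr rfl fun j _ => hstd i j _

lemma auxHermTrace {X M : Mat d} (hM : M.IsHermitian) :
    ((Xᴴ * M).trace).re = ((X * M).trace).re := by
  have h1 : Xᴴ * M = (Mᴴ * X)ᴴ := by rw [conjTranspose_mul, conjTranspose_conjTranspose]
  rw [h1, trace_conjTranspose, hM.eq, trace_mul_comm]
  simp

lemma auxVecMulVecPsd (v : Fin d → ℂ) : (vecMulVec v (star v)).PosSemidef := by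
  rw [posSemidef_iff_dotProduct_mulVec]
  have hmv : ∀ x, (vecMulVec v (star v)) *ᵥ x = (star v ⬝ᵥ x) • v := by
    intro x
    ext i
    simp only [mulVec, vecMulVec_apply, dotProduct, Pi.star_apply, Pi.smul_apply, smul_eq_mul,
      Finset.sum_mul, Finset.mul_sum]
    exact Finset.sum_congr rfl fun j _ => by ring
  constructor
  · show _ᴴ = _
    ext i j
    simp [vecMulVec_apply, conjTranspose_apply, mul_comm]
  · intro x
    rw [hmv, dotProduct_smul]
    have h2 : star x ⬝ᵥ v = star (star v ⬝ᵥ x) := by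
      rw [star_dotProduct]
    rw [smul_eq_mul, h2]
    exact mul_star_self_nonneg _
lemma auxTraceVecMulVec (Y : Mat d) (v : Fin d → ℂ) :
    (Y * vecMulVec v (star v)).trace = star v ⬝ᵥ (Y *ᵥ v) := by
  rw [Matrix.trace]
  simp only [Matrix.diag_apply, Matrix.mul_apply, vecMulVec_apply, dotProduct, mulVec,
    Pi.star_apply, Finset.mul_sum]
  exact Finset.sum_congr rfl fun i _ => Finset.sum_congr rfl fun k _ => by ring

lemma auxHermQuadReal {Y : Mat d} (hY : Y.IsHermitian) (v : Fin d → ℂ) :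
    star (star v ⬝ᵥ (Y *ᵥ v)) = star v ⬝ᵥ (Y *ᵥ v) := by
  conv_lhs => rw [dotProduct_comm]
  rw [← dotProduct_star v (Y *ᵥ v), star_mulVec, hY.eq, dotProduct_comm, ← dotProduct_mulVec]



instance inst_s18 : LocallyConvexSpace ℝ (Mat d) :=
  show LocallyConvexSpace ℝ (Fin d → Fin d → ℂ) from inferInstance




lemma auxPsdConvex : Convex ℝ {M : Mat d | M.PosSemidef} := by
  intro x hx y hy a b ha hb _
  exact (auxPsdSmul ha hx).add (auxPsdSmul hb hy)

lemma auxSep {A : Set (Mat d)} (hA : mCorner A) (hAcomp : IsCompact A)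
    {N ε : ℝ} (hε : 0 < ε) (hN : 0 ≤ N)
    (hNmax : (N + ε) • (1 : Mat d) ∉ A) :
    ∃ ρ : Mat d, ρ.PosSemidef ∧ ρ.trace = 1 ∧ ∀ B ∈ A, ((ρ * B).trace).re ≤ N + ε := by
  obtain ⟨b₀, hb₀⟩ := hA.1
  -- the set C = A - PSD
  set C : Set (Mat d) := A + (-{M : Mat d | M.PosSemidef}) with hC
  have hmemC : ∀ M : Mat d, M ∈ C ↔ ∃ B ∈ A, (B - M).PosSemidef := by
    intro M
    constructor
    · rintro ⟨B, hB, y, hy, rfl⟩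
      refine ⟨B, hB, ?_⟩
      rw [Set.mem_neg] at hy
      simpa using hy
    · rintro ⟨B, hB, hP⟩
      exact ⟨B, hB, M - B, by rw [Set.mem_neg]; simpa using hP, by simp⟩
  have hCclosed : IsClosed C :=
    IsClosed.add_left_of_isCompact (auxPsdClosed.neg) hAcomp
  have hCconvex : Convex ℝ C := (hA.2.2.2.1).add (auxPsdConvex.neg)
  have hxnot : (N + ε) • (1 : Mat d) ∉ C := by
    intro hmem
    obtain ⟨B, hB, hP⟩ := (hmemC _).mp hmem
    exact hNmax (hA.2.2.2.2 B hB _ (auxPsdSmul (by linarith) Matrix.PosSemidef.one) hP)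
  obtain ⟨f, u, hfC, hfx⟩ := geometric_hahn_banach_closed_point hCconvex hCclosed hxnot
  have hmemC' : ∀ B ∈ A, B ∈ C := fun B hB =>
    (hmemC B).mpr ⟨B, hB, by simpa using Matrix.PosSemidef.zero⟩
  have hb₀C : f b₀ < u := hfC b₀ (hmemC' b₀ hb₀)
  have hu0 : 0 < u := by
    have h0 : (0 : Mat d) ∈ C := (hmemC 0).mpr ⟨b₀, hb₀, by simpa using hA.2.1 b₀ hb₀⟩
    have := hfC 0 h0
    rwa [map_zero] at this
  have hfP : ∀ P : Mat d, P.PosSemidef → 0 ≤ f P := by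
    intro P hP
    by_contra hneg
    push_neg at hneg
    set t : ℝ := (f b₀ - u) / f P with ht
    have ht0 : 0 < t := div_pos_of_neg_of_neg (by linarith) hneg
    have hmem : b₀ - t • P ∈ C :=
      (hmemC _).mpr ⟨b₀, hb₀, by rw [sub_sub_cancel]; exact auxPsdSmul ht0.le hP⟩
    have hlt := hfC _ hmem
    rw [map_sub, _root_.map_smul, smul_eq_mul, ht, div_mul_cancel₀ _ hneg.ne] at hlt
    linarith
  obtain ⟨X, hX⟩ := auxRepr f
  set Y : Mat d := (2⁻¹ : ℝ) • (X + Xᴴ) with hY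
  have hYherm : Y.IsHermitian := by
    show Yᴴ = Y
    rw [hY, conjTranspose_smul, star_trivial, conjTranspose_add, conjTranspose_conjTranspose,
      add_comm]
  have hYtr : ∀ M : Mat d, M.IsHermitian → ((Y * M).trace).re = f M := by
    intro M hM
    rw [hY, smul_mul_assoc, add_mul, trace_smul, trace_add]
    rw [Complex.smul_re, Complex.add_re, auxHermTrace hM, ← hX M]
    simp
    ring
  have hYpsd : Y.PosSemidef := by
    refine Matrix.PosSemidef.of_dotProduct_mulVec_nonneg hYherm fun v => ?_
    rw [Complex.le_def]
    constructor
    · have h1 : (star v ⬝ᵥ (Y *ᵥ v)).re = ((Y * vecMulVec v (star v)).trace).re := by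
        rw [auxTraceVecMulVec]
      rw [h1, hYtr _ (auxVecMulVecPsd v).1]
      simpa using hfP _ (auxVecMulVecPsd v)
    · have h2 := auxHermQuadReal hYherm v
      have h3 := congrArg Complex.im h2
      simp only [Complex.star_def, Complex.conj_im] at h3
      simp only [Complex.zero_im]
      linarith
  -- trace of Y is positive
  have hxval : f ((N + ε) • (1 : Mat d)) = (N + ε) * (Y.trace).re := by
    rw [← hYtr _ (by
      show ((N + ε) • (1 : Mat d))ᴴ = _
      rw [conjTranspose_smul, star_trivial, conjTranspose_one])]
    rw [mul_smul_comm, mul_one, trace_smul, Complex.smul_re, smul_eq_mul]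
  have hτpos : 0 < (Y.trace).re := by
    have h4 : u < (N + ε) * (Y.trace).re := by rw [← hxval]; exact hfx
    nlinarith
  set τ : ℝ := (Y.trace).re with hτ
  have hYtrace : Y.trace = (τ : ℂ) := by
    have h5 : star Y.trace = Y.trace := by
      conv_lhs => rw [← trace_conjTranspose, hYherm.eq]
    apply Complex.ext
    · rfl
    · have := congrArg Complex.im h5
      simp only [Complex.star_def, Complex.conj_im] at this
      simp only [Complex.ofReal_im]
      linarith
  refine ⟨τ⁻¹ • Y, auxPsdSmul (inv_nonneg.mpr hτpos.le) hYpsd, ?_, ?_⟩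
  · rw [trace_smul, hYtrace, Complex.real_smul, ← Complex.ofReal_mul,
      inv_mul_cancel₀ hτpos.ne', Complex.ofReal_one]
  · intro B hB
    have hfB : f B < u := hfC B (hmemC' B hB)
    have hBval : ((τ⁻¹ • Y * B).trace).re = τ⁻¹ * f B := by
      rw [smul_mul_assoc, trace_smul, Complex.smul_re, smul_eq_mul,
        hYtr _ (hA.2.1 B hB).1]
    rw [hBval]
    have h6 : f B ≤ (N + ε) * τ := by
      have h4 : u < (N + ε) * τ := by rw [← hxval]; exact hfx
      linarith
    calc τ⁻¹ * f B ≤ τ⁻¹ * ((N + ε) * τ) := by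
          exact mul_le_mul_of_nonneg_left h6 (inv_nonneg.mpr hτpos.le)
      _ = N + ε := by field_simp









end AuxCorner

/-- For a standard convex corner `A ⊆ M_d` (`d ≥ 1`), the maximum over all
density matrices `ρ` of the entropy `H_A(ρ) = min_{B ∈ A} -Tr(ρ log B)` equals
`-log N(A)`, where `N(A) = max {β : β • I ∈ A}`. -/
theorem max_entropy_eq_neg_log_N {d : ℕ} (hd : 0 < d)
    (A : Set (Matrix (Fin d) (Fin d) ℂ)) (hA : mCorner A) (hbdd : mBounded A)
    (hint : mRelIntNonempty A) :
    IsGreatest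
      {x : EReal | ∃ ρ : Matrix (Fin d) (Fin d) ℂ,
        ρ.PosSemidef ∧ ρ.trace = 1 ∧ x = ⨅ B ∈ A, negTrLog ρ B}
      ((-Real.log (sSup {β : ℝ | 0 ≤ β ∧ β • (1 : Matrix (Fin d) (Fin d) ℂ) ∈ A}) : ℝ)
        : EReal) := by

  obtain ⟨b₀, hb₀⟩ := hA.1
  obtain ⟨c, hc⟩ := hbdd
  set S : Set ℝ := {β : ℝ | 0 ≤ β ∧ β • (1 : Matrix (Fin d) (Fin d) ℂ) ∈ A} with hS
  have h0S : (0 : ℝ) ∈ S := by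
    refine ⟨le_refl 0, ?_⟩
    rw [zero_smul]
    exact hA.2.2.2.2 b₀ hb₀ 0 Matrix.PosSemidef.zero (by simpa using hA.2.1 b₀ hb₀)
  have hSbdd : BddAbove S := by
    refine ⟨c, fun β hβ => ?_⟩
    have h1 := hc _ hβ.2 ⟨0, hd⟩ ⟨0, hd⟩
    have h2 : (β • (1 : Matrix (Fin d) (Fin d) ℂ)) ⟨0, hd⟩ ⟨0, hd⟩ = (β : ℂ) := by
      rw [Matrix.smul_apply, Matrix.one_apply_eq, Complex.real_smul, mul_one]
    rw [h2] at h1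
    rw [Complex.norm_real, Real.norm_of_nonneg hβ.1] at h1
    exact h1
  have hSclosed : IsClosed S := by
    have : S = Set.Ici (0:ℝ) ∩ (fun β : ℝ => β • (1 : Matrix (Fin d) (Fin d) ℂ)) ⁻¹' A := by
      ext β; rfl
    rw [this]
    exact isClosed_Ici.inter (hA.2.2.1.preimage (continuous_id.smul continuous_const))
  set N : ℝ := sSup S with hN
  have hNS : N ∈ S := hSclosed.csSup_mem ⟨0, h0S⟩ hSbdd
  have hN0 : 0 ≤ N := hNS.1
  have hNA : N • (1 : Matrix (Fin d) (Fin d) ℂ) ∈ A := hNS.2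
  -- N is positive
  have hNpos : 0 < N := by
    obtain ⟨M, hM, hnb⟩ := hint
    obtain ⟨U, hUopen, hMU, hsub⟩ := mem_nhdsWithin.mp hnb
    have hcont : Filter.Tendsto (fun t : ℝ => M + t • (1 : Mat d)) (nhds 0) (nhds M) := by
      have : Continuous fun t : ℝ => M + t • (1 : Mat d) :=
        continuous_const.add (continuous_id.smul continuous_const)
      simpa using this.tendsto 0
    have hev : ∀ᶠ t : ℝ in nhds 0, M + t • (1 : Mat d) ∈ U :=
      hcont.eventually (hUopen.eventually_mem hMU)
    have hev' : ∀ᶠ t : ℝ in nhdsWithin 0 (Set.Ioi 0), M + t • (1 : Mat d) ∈ U :=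
      hev.filter_mono nhdsWithin_le_nhds
    obtain ⟨t, htU, ht0⟩ := (hev'.and (eventually_mem_nhdsWithin)).exists
    have hMpsd := hA.2.1 M hM
    have htpsd : (t • (1 : Mat d)).PosSemidef :=
      auxPsdSmul (le_of_lt ht0) Matrix.PosSemidef.one
    have hsum : M + t • (1 : Mat d) ∈ A := hsub ⟨htU, hMpsd.add htpsd⟩
    have htS : t ∈ S := by
      refine ⟨le_of_lt ht0, ?_⟩
      exact hA.2.2.2.2 _ hsum _ htpsd (by simpa using hMpsd)
    exact lt_of_lt_of_le ht0 (le_csSup hSbdd htS)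
  have hAcomp : IsCompact A := auxCompactOfBounded hA.2.2.1 ⟨c, hc⟩
  have hNotin : ∀ ε : ℝ, 0 < ε → (N + ε) • (1 : Mat d) ∉ A := by
    intro ε hε hmem
    have : N + ε ∈ S := ⟨by linarith, hmem⟩
    have := le_csSup hSbdd this
    linarith
  -- the optimal ρ via compactness
  set K : ℕ → Set (Mat d) := fun n =>
    {ρ : Mat d | ρ.PosSemidef ∧ ρ.trace = 1 ∧
      ∀ B ∈ A, ((ρ * B).trace).re ≤ N + 1 / (n + 1)} with hK
  have hKne : ∀ n, (K n).Nonempty := by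
    intro n
    have hpos : (0:ℝ) < 1 / (n + 1) := by positivity
    obtain ⟨ρ, h1, h2, h3⟩ := auxSep hA hAcomp hpos hN0 (hNotin _ hpos)
    exact ⟨ρ, h1, h2, h3⟩
  have hKclosed : ∀ n, IsClosed (K n) := by
    intro n
    have : K n = ({ρ : Mat d | ρ.PosSemidef} ∩ {ρ : Mat d | ρ.trace = 1}) ∩
        ⋂ B ∈ A, {ρ : Mat d | ((ρ * B).trace).re ≤ N + 1 / (n + 1)} := by
      ext ρ
      simp only [hK, Set.mem_setOf_eq, Set.mem_inter_iff, Set.mem_iInter]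
      tauto
    rw [this]
    refine (auxPsdClosed.inter (isClosed_eq (continuous_id.matrix_trace) continuous_const)).inter
      (isClosed_biInter fun B _ => isClosed_le ?_ continuous_const)
    exact Complex.continuous_re.comp ((continuous_id.matrix_mul continuous_const).matrix_trace)
  have hKmono : ∀ n, K (n + 1) ⊆ K n := by
    intro n ρ hρ
    refine ⟨hρ.1, hρ.2.1, fun B hB => le_trans (hρ.2.2 B hB) ?_⟩
    have h7 : (1 : ℝ) / ((n:ℝ) + 1 + 1) ≤ 1 / ((n:ℝ) + 1) := by
      apply one_div_le_one_div_of_le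
      · positivity
      · linarith
    push_cast
    push_cast at h7
    linarith
  obtain ⟨ρ, hρ⟩ := IsCompact.nonempty_iInter_of_sequence_nonempty_isCompact_isClosed K
    hKmono hKne (auxCompactOfBounded (hKclosed 0)
      ⟨1, fun M hM i j => auxEntryBound hM.1 hM.2.1 i j⟩) hKclosed
  simp only [Set.mem_iInter] at hρ
  have hρpsd : ρ.PosSemidef := (hρ 0).1
  have hρtr : ρ.trace = 1 := (hρ 0).2.1
  have hρbound : ∀ B ∈ A, ((ρ * B).trace).re ≤ N := by
    intro B hB
    by_contra hgt
    push_neg at hgt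
    obtain ⟨n, hn⟩ := exists_nat_one_div_lt (by linarith : (0:ℝ) < ((ρ * B).trace).re - N)
    have h8 := (hρ n).2.2 B hB
    linarith
  constructor
  · refine ⟨ρ, hρpsd, hρtr, ?_⟩
    apply le_antisymm
    · exact le_iInf₂ fun B hB => auxJensen hρpsd hρtr (hA.2.1 B hB) hNpos (hρbound B hB)
    · calc ⨅ B ∈ A, negTrLog ρ B ≤ negTrLog ρ (N • (1 : Mat d)) := iInf₂_le _ hNA
        _ = _ := auxNegTrLogScalar hρtr hNpos
  · rintro x ⟨ρ', h1, h2, rfl⟩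
    calc ⨅ B ∈ A, negTrLog ρ' B ≤ negTrLog ρ' (N • (1 : Mat d)) := iInf₂_le _ hNA
      _ = _ := auxNegTrLogScalar h2 hNpos
end

section
/- If 𝒜 is a diagonal convex corner in M_d and ℬ is a convex corner with Δ(ℬ) = 𝒟_d ∩ ℬ = 𝒜 (a non-commutative lift of 𝒜), then her(𝒜) ⊆ ℬ ⊆ (𝒜^♭)^♯; conversely every convex corner ℬ with her(𝒜) ⊆ ℬ ⊆ (𝒜^♭)^♯ is a non-commutative lift of 𝒜. -/
open Matrix
open scoped ComplexOrder

namespace NCLiftAux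
variable {d : ℕ}

lemma diag_nonneg {M : Matrix (Fin d) (Fin d) ℂ} (hM : M.PosSemidef) (i : Fin d) :
    0 ≤ M i i := by
  exact hM.diag_nonneg

lemma diag_re_nonneg {M : Matrix (Fin d) (Fin d) ℂ} (hM : M.PosSemidef) (i : Fin d) :
    0 ≤ (M i i).re := (Complex.nonneg_iff.mp (diag_nonneg hM i)).1

lemma diag_eq_re {M : Matrix (Fin d) (Fin d) ℂ} (hM : M.PosSemidef) (i : Fin d) :
    M i i = ((M i i).re : ℂ) := by
  have h := Complex.nonneg_iff.mp (diag_nonneg hM i)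
  exact Complex.ext (by simp) (by simp [h.2.symm])

lemma trace_mul_right_diag {X Y : Matrix (Fin d) (Fin d) ℂ}
    (h : ∀ i j, i ≠ j → Y i j = 0) : (X * Y).trace = ∑ i, X i i * Y i i := by
  rw [Matrix.trace]
  refine Finset.sum_congr rfl fun i _ => ?_
  rw [Matrix.diag_apply, Matrix.mul_apply]
  refine Finset.sum_eq_single i (fun j _ hj => ?_) (by simp)
  rw [h j i hj, mul_zero]

lemma trace_mul_left_diag {X Y : Matrix (Fin d) (Fin d) ℂ}
    (h : ∀ i j, i ≠ j → X i j = 0) : (X * Y).trace = ∑ i, X i i * Y i i := by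
  rw [Matrix.trace]
  refine Finset.sum_congr rfl fun i _ => ?_
  rw [Matrix.diag_apply, Matrix.mul_apply]
  refine Finset.sum_eq_single i (fun j _ hj => ?_) (by simp)
  rw [h i j (Ne.symm hj), zero_mul]

/-- the embedding of a real vector as a diagonal complex matrix -/
noncomputable def psi (v : Fin d → ℝ) : Matrix (Fin d) (Fin d) ℂ :=
  Matrix.diagonal (fun i => (v i : ℂ))

lemma psi_offdiag (v : Fin d → ℝ) : ∀ i j, i ≠ j → psi v i j = 0 := by
  intro i j hij; simp [psi, Matrix.diagonal_apply_ne _ hij]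

lemma psi_apply_diag (v : Fin d → ℝ) (i : Fin d) : psi v i i = (v i : ℂ) := by
  simp [psi]

lemma psi_posSemidef {v : Fin d → ℝ} (hv : ∀ i, 0 ≤ v i) : (psi v).PosSemidef :=
  Matrix.PosSemidef.diagonal fun i => Complex.zero_le_real.mpr (hv i)

lemma psi_sub (v w : Fin d → ℝ) : psi v - psi w = psi (v - w) := by
  ext i j
  by_cases h : i = j
  · subst h; simp [psi]
  · simp [psi, Matrix.diagonal_apply_ne _ h]

lemma psi_eq_self {M : Matrix (Fin d) (Fin d) ℂ} (hM : M.PosSemidef)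
    (hMd : ∀ i j, i ≠ j → M i j = 0) : psi (fun i => (M i i).re) = M := by
  ext i j
  by_cases h : i = j
  · subst h; rw [psi_apply_diag, ← diag_eq_re hM]
  · rw [hMd i j h]; exact psi_offdiag _ i j h

/-- KEY: a diagonal psd matrix in `(A^♭)^♯` lies in `A`. -/
lemma key {A : Set (Matrix (Fin d) (Fin d) ℂ)}
    (hne : A.Nonempty)
    (hdiag : ∀ M ∈ A, M.PosSemidef ∧ ∀ i j, i ≠ j → M i j = 0)
    (hclosed : IsClosed A) (hconv : Convex ℝ A)
    (hher : ∀ N ∈ A, ∀ M : Matrix (Fin d) (Fin d) ℂ,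
      M.PosSemidef → (∀ i j, i ≠ j → M i j = 0) → (N - M).PosSemidef → M ∈ A)
    {M : Matrix (Fin d) (Fin d) ℂ} (hMpsd : M.PosSemidef)
    (hMd : ∀ i j, i ≠ j → M i j = 0)
    (hM : ∀ P, P ∈ mSharp A → (∀ i j, i ≠ j → P i j = 0) → ((M * P).trace).re ≤ 1) :
    M ∈ A := by
  by_contra hMA
  -- the real diagonal picture
  set S : Set (Fin d → ℝ) := (fun v => psi v) ⁻¹' A with hS
  have hpsicont : Continuous (fun v : Fin d → ℝ => psi v) :=
    Continuous.matrix_diagonal (continuous_pi fun i =>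
      Complex.continuous_ofReal.comp (continuous_apply i))
  have hSclosed : IsClosed S := hclosed.preimage hpsicont
  have hSconv : Convex ℝ S := by
    intro x hx y hy a b ha hb hab
    show psi (a • x + b • y) ∈ A
    have : psi (a • x + b • y) = a • psi x + b • psi y := by
      ext i j
      by_cases h : i = j
      · subst h
        simp only [psi, Matrix.add_apply, Matrix.smul_apply, Matrix.diagonal_apply_eq,
          Pi.add_apply, Pi.smul_apply, smul_eq_mul, Complex.real_smul]
        push_cast
        ring
      · simp [psi, Matrix.diagonal_apply_ne _ h]
    rw [this]
    exact hconv hx hy ha hb hab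
  have hSnonneg : ∀ a ∈ S, ∀ i, 0 ≤ a i := by
    intro a ha i
    have := diag_nonneg (hdiag _ ha).1 i
    exact Complex.zero_le_real.mp (by simpa [psi] using this)
  -- membership in S is hereditary
  have hSher : ∀ a ∈ S, ∀ b : Fin d → ℝ, (∀ i, 0 ≤ b i) → (∀ i, b i ≤ a i) → b ∈ S := by
    intro a ha b hb hba
    refine hher (psi a) ha (psi b) (psi_posSemidef hb) (psi_offdiag b) ?_
    rw [psi_sub]
    exact psi_posSemidef fun i => by simpa using hba i
  -- 0 ∈ S
  obtain ⟨N0, hN0⟩ := hne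
  have h0S : (0 : Fin d → ℝ) ∈ S := by
    have := hher N0 hN0 (psi 0) (psi_posSemidef fun i => le_refl 0) (psi_offdiag 0) ?_
    · exact this
    · rw [show N0 - psi 0 = N0 by ext i j; by_cases h : i = j <;>
        simp [psi, Matrix.diagonal_apply_ne, h]]
      exact (hdiag _ hN0).1
  -- the vector of M is not in S
  set v : Fin d → ℝ := fun i => (M i i).re with hv
  have hvS : v ∉ S := by
    intro h
    exact hMA (by rwa [hS, Set.mem_preimage, psi_eq_self hMpsd hMd] at h)
  have hvnn : ∀ i, 0 ≤ v i := fun i => diag_re_nonneg hMpsd i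
  -- separate
  obtain ⟨f, u, hfu, huv⟩ := geometric_hahn_banach_closed_point hSconv hSclosed hvS
  have hu0 : 0 < u := by simpa using hfu 0 h0S
  -- the linear functional coordinates
  have hrep : ∀ w : Fin d → ℝ, f w = ∑ i, w i * f (Pi.single i 1) := by
    intro w
    have hw : w = ∑ i, w i • (Pi.single i 1 : Fin d → ℝ) := by
      ext j
      simp [Pi.single_apply, Finset.sum_ite_eq']
    conv_lhs => rw [hw]
    rw [map_sum]
    simp [smul_eq_mul]
  set c : Fin d → ℝ := fun i => max (f (Pi.single i 1)) 0 with hc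
  have hcnn : ∀ i, 0 ≤ c i := fun i => le_max_right _ _
  -- ∑ c i * a i < u for all a ∈ S
  have hcu : ∀ a ∈ S, ∑ i, c i * a i < u := by
    intro a ha
    set a' : Fin d → ℝ := fun i => if 0 ≤ f (Pi.single i 1) then a i else 0 with ha'
    have ha'S : a' ∈ S := by
      refine hSher a ha a' (fun i => ?_) (fun i => ?_)
      · by_cases h : 0 ≤ f (Pi.single i 1) <;> simp [ha', h, hSnonneg a ha i]
      · by_cases h : 0 ≤ f (Pi.single i 1) <;> simp [ha', h, hSnonneg a ha i]
    have : ∑ i, c i * a i = f a' := by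
      rw [hrep a']
      refine Finset.sum_congr rfl fun i _ => ?_
      by_cases h : 0 ≤ f (Pi.single i 1)
      · simp [ha', hc, h, max_eq_left h, mul_comm]
      · simp [ha', hc, h, max_eq_right (le_of_not_ge h)]
    rw [this]
    exact hfu a' ha'S
  -- u < ∑ c i * v i
  have hcv : u < ∑ i, c i * v i := by
    refine lt_of_lt_of_le huv ?_
    rw [hrep v]
    refine Finset.sum_le_sum fun i _ => ?_
    rw [mul_comm (c i) (v i)]
    exact mul_le_mul_of_nonneg_left (le_max_left _ _) (hvnn i)
  -- the separating matrix
  set n : Fin d → ℝ := fun i => c i / u with hn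
  set N : Matrix (Fin d) (Fin d) ℂ := psi n with hN
  have hNd : ∀ i j, i ≠ j → N i j = 0 := psi_offdiag _
  have hNsharp : N ∈ mSharp A := by
    refine ⟨psi_posSemidef fun i => div_nonneg (hcnn i) hu0.le, fun P hP => ?_⟩
    have hPd := (hdiag P hP).2
    rw [trace_mul_left_diag hNd]
    have heq : ∀ i, N i i * P i i = ((n i * (P i i).re : ℝ) : ℂ) := by
      intro i
      conv_lhs => rw [hN, psi_apply_diag, diag_eq_re (hdiag P hP).1 i]
      push_cast
      ring
    rw [Finset.sum_congr rfl fun i _ => heq i, ← Complex.ofReal_sum, Complex.ofReal_re]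
    have hPS : (fun i => (P i i).re) ∈ S := by
      rw [hS, Set.mem_preimage, psi_eq_self (hdiag P hP).1 hPd]
      exact hP
    calc ∑ i, n i * (P i i).re = (∑ i, c i * (P i i).re) / u := by
          rw [Finset.sum_div]
          exact Finset.sum_congr rfl fun i _ => by rw [hn]; ring
      _ ≤ 1 := by
          rw [div_le_one hu0]
          exact (hcu _ hPS).le
  -- contradiction
  have hle := hM N hNsharp hNd
  rw [trace_mul_left_diag hMd] at hle
  have heq2 : ∀ i, M i i * N i i = ((v i * n i : ℝ) : ℂ) := by
    intro i
    conv_lhs => rw [hN, psi_apply_diag, diag_eq_re hMpsd i]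
    push_cast
    ring
  rw [Finset.sum_congr rfl fun i _ => heq2 i, ← Complex.ofReal_sum, Complex.ofReal_re] at hle
  have : (1:ℝ) < ∑ i, v i * n i := by
    have heq3 : ∑ i, v i * n i = (∑ i, c i * v i) / u := by
      rw [Finset.sum_div]
      exact Finset.sum_congr rfl fun i _ => by rw [hn]; ring
    rw [heq3, lt_div_iff₀ hu0, one_mul]
    exact hcv
  linarith

end NCLiftAux

/-- Characterisation of the non-commutative lifts of a diagonal convex
corner `A`: a convex corner `B` satisfies `Δ(B) = 𝒟_d ∩ B = A` if and only if
`her(A) ⊆ B ⊆ (A^♭)^♯`, where `A^♭ = 𝒟_d ∩ A^♯`. -/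
theorem noncommutative_lift_characterisation {d : ℕ}
    (A B : Set (Matrix (Fin d) (Fin d) ℂ))
    (hne : A.Nonempty)
    (hdiag : ∀ M ∈ A, M.PosSemidef ∧ ∀ i j, i ≠ j → M i j = 0)
    (hclosed : IsClosed A) (hconv : Convex ℝ A)
    (hher : ∀ N ∈ A, ∀ M : Matrix (Fin d) (Fin d) ℂ,
      M.PosSemidef → (∀ i j, i ≠ j → M i j = 0) → (N - M).PosSemidef → M ∈ A)
    (hB : mCorner B) :
    ((fun M : Matrix (Fin d) (Fin d) ℂ => Matrix.diagonal M.diag) '' B = A ∧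
      B ∩ {M : Matrix (Fin d) (Fin d) ℂ | ∀ i j, i ≠ j → M i j = 0} = A)
    ↔ (mHer A ⊆ B ∧
        B ⊆ mSharp (mSharp A ∩
          {M : Matrix (Fin d) (Fin d) ℂ | ∀ i j, i ≠ j → M i j = 0})) := by
  
  constructor
  · rintro ⟨hIm, hCap⟩
    have hAB : A ⊆ B := fun M hM => by
      rw [← hCap] at hM; exact hM.1
    constructor
    · rintro M ⟨hMpsd, N, hNA, hNM⟩
      exact hB.2.2.2.2 N (hAB hNA) M hMpsd hNM
    · intro M hMB
      refine ⟨hB.2.1 M hMB, fun P hP => ?_⟩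
      obtain ⟨hPsharp, hPd⟩ := hP
      have hDM : Matrix.diagonal M.diag ∈ A := by
        rw [← hIm]; exact ⟨M, hMB, rfl⟩
      have h1 := hPsharp.2 _ hDM
      have heq : (M * P).trace = (P * Matrix.diagonal M.diag).trace := by
        rw [NCLiftAux.trace_mul_right_diag hPd,
          NCLiftAux.trace_mul_right_diag (fun i j hij => Matrix.diagonal_apply_ne _ hij)]
        exact Finset.sum_congr rfl fun i _ => by
          rw [Matrix.diagonal_apply_eq, Matrix.diag_apply, mul_comm]
      rw [heq]
      exact h1
  · rintro ⟨h1, h2⟩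
    have hAB : A ⊆ B := by
      intro M hM
      refine h1 ⟨(hdiag M hM).1, M, hM, ?_⟩
      rw [sub_self]
      exact Matrix.PosSemidef.zero
    have hkey : ∀ M : Matrix (Fin d) (Fin d) ℂ, M.PosSemidef →
        (∀ i j, i ≠ j → M i j = 0) →
        (∀ P, P ∈ mSharp A → (∀ i j, i ≠ j → P i j = 0) → ((M * P).trace).re ≤ 1) →
        M ∈ A := fun M hMpsd hMd hM =>
      NCLiftAux.key hne hdiag hclosed hconv hher hMpsd hMd hM
    constructor
    · apply Set.eq_of_subset_of_subset
      · rintro _ ⟨M, hMB, rfl⟩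
        have hMpsd := hB.2.1 M hMB
        have hDpsd : (Matrix.diagonal M.diag).PosSemidef :=
          Matrix.PosSemidef.diagonal fun i => NCLiftAux.diag_nonneg hMpsd i
        refine hkey _ hDpsd (fun i j hij => Matrix.diagonal_apply_ne _ hij) ?_
        intro P hPsharp hPd
        have hMem := (h2 hMB).2 P ⟨hPsharp, hPd⟩
        have heq : (Matrix.diagonal M.diag * P).trace = (M * P).trace := by
          rw [NCLiftAux.trace_mul_right_diag hPd, NCLiftAux.trace_mul_right_diag hPd]
          exact Finset.sum_congr rfl fun i _ => by
            rw [Matrix.diagonal_apply_eq, Matrix.diag_apply]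
        rw [heq]
        exact hMem
      · intro M hM
        refine ⟨M, hAB hM, ?_⟩
        ext i j
        show Matrix.diagonal M.diag i j = M i j
        by_cases h : i = j
        · subst h; rw [Matrix.diagonal_apply_eq, Matrix.diag_apply]
        · rw [Matrix.diagonal_apply_ne _ h, (hdiag M hM).2 i j h]
    · apply Set.eq_of_subset_of_subset
      · rintro M ⟨hMB, hMd⟩
        refine hkey M (hB.2.1 M hMB) hMd ?_
        intro P hPsharp hPd
        exact (h2 hMB).2 P ⟨hPsharp, hPd⟩
      · intro M hM
        exact ⟨hAB hM, (hdiag M hM).2⟩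
end
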